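/- arXiv:2212.03918 — 5 statements merged into one kernel-verified Lean document; each statement's English description precedes it below -/
import Mathlib

section
/- If the Kneser graph K(n,k) admits a Hamilton cycle, then the bipartite Kneser graph H(n,k) admits a Hamilton cycle or a Hamilton path. More precisely, given a Hamilton cycle C = (x_1,...,x_N) in K(n,k) with N = C(n,k), the sequences P = (x_1, complement(x_2), x_3, complement(x_4), ...) and P' = (complement(x_1), x_2, complement(x_3), x_4, ...) are spanning paths in H(n,k); if N is odd their concatenation is a Hamilton cycle of H(n,k), and if N is even they are two disjoint cycles spanning H(n,k). -/
/-- The Kneser graph `K(n,k)`. -/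
def kneserGraph (n k : ℕ) : SimpleGraph {A : Finset (Fin n) // A.card = k} where
  Adj A B := A ≠ B ∧ Disjoint A.1 B.1
  symm := by constructor; intro A B h; exact ⟨h.1.symm, h.2.symm⟩
  loopless := by constructor; intro A h; exact h.1 rfl

/-- The bipartite Kneser graph `H(n,k)`: vertices are all `k`-element and all
`(n-k)`-element subsets of `{1,…,n}`, with an edge between `A` and `B` iff `A ⊆ B`
or `B ⊆ A` (and `A ≠ B`). -/
def bipartiteKneserGraph (n k : ℕ) :
    SimpleGraph {A : Finset (Fin n) // A.card = k ∨ A.card = n - k} where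
  Adj A B := A ≠ B ∧ (A.1 ⊆ B.1 ∨ B.1 ⊆ A.1)
  symm := by constructor; intro A B h; exact ⟨h.1.symm, h.2.symm⟩
  loopless := by constructor; intro A h; exact h.1 rfl

/-!
Putting a `k`-set `A` on sheet `0` as `A` and on sheet `1` as `Aᶜ` identifies the bipartite double
cover of `K(n,k)` with `H(n,k)`, because `A` and `B` are disjoint iff `A ⊆ Bᶜ`. Lifting a Hamilton
cycle `x₀, …, x_{N-1}` of `K(n,k)` to the double cover with alternating sheets gives `P` and `P'`.
For odd `N` the lift of `t ∈ ZMod (2N)` is `x_{t mod N}` on sheet `t mod 2`, a Hamilton cycle by the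
Chinese remainder theorem. For even `N` the two lifts close up into two disjoint cycles. As
`N = C(n,k) > 2 C(n-1,k-1)`, the Erdős–Ko–Rado theorem gives disjoint `x_i`, `x_j` with `i ≡ j`
(mod 2); this edge of `K(n,k)` lifts to an edge joining the two cycles, through which they combine
into a Hamilton path.
-/

open Function Finset

namespace SimpleGraph

variable {V : Type*} {G : SimpleGraph V}

lemma cycleGraph_adj_add_one {m : ℕ} (x : Fin (m + 2)) : (cycleGraph (m + 2)).Adj x (x + 1) :=
  cycleGraph_adj.mpr (.inr (add_sub_cancel_left x 1))

/-- The sheets of `V ⊕ V` are indexed by `ZMod 2`, so that each edge of the double cover adds `1`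
to the sheet index. -/
def zmodTwoProdEquivSum (V : Type*) : ZMod 2 × V ≃ V ⊕ V where
  toFun p := if p.1 = 0 then .inl p.2 else .inr p.2
  invFun := Sum.elim (Prod.mk 0) (Prod.mk 1)
  left_inv := by rintro ⟨b, v⟩; fin_cases b <;> rfl
  right_inv := by rintro (v | v) <;> rfl

lemma bipartiteDoubleCover_adj_zmodTwoProdEquivSum {v w : V} (b : ZMod 2) (h : G.Adj v w) :
    G.bipartiteDoubleCover.Adj (zmodTwoProdEquivSum V (b, v))
      (zmodTwoProdEquivSum V (b + 1, w)) := by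
  fin_cases b <;> exact h

variable [DecidableEq V]

lemma exists_isHamiltonianCycle_of_bijective {N : ℕ} [NeZero N] (hN : 3 ≤ N) {f : ZMod N → V}
    (hf : Bijective f) (hadj : ∀ t, G.Adj (f t) (f (t + 1))) :
    ∃ a, ∃ p : G.Walk a a, p.IsHamiltonianCycle := by
  obtain ⟨m, rfl⟩ : ∃ m, N = m + 3 := ⟨N - 3, by omega⟩
  let e := ZMod.finEquiv (m + 3)
  let φ : cycleGraph (m + 3) →g G :=
    { toFun := f ∘ e
      map_rel' := by
        rintro u v (h | h) <;> rw [sub_eq_iff_eq_add'] at h <;> subst h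
        · simpa using (hadj (e v)).symm
        · simpa using hadj (e u) }
  have hcycle : (cycleGraph.cycle m).IsHamiltonianCycle :=
    Walk.isHamiltonianCycle_iff_isCycle_and_length_eq.mpr ⟨cycleGraph.isCycle_cycle, by simp⟩
  exact ⟨_, _, hcycle.map (f := φ) (hf.comp e.bijective)⟩

lemma exists_isHamiltonian_of_bijective {M : ℕ} [NeZero M] {g : Fin M → V} (hg : Bijective g)
    (hadj : ∀ t (ht : t + 1 < M), G.Adj (g ⟨t, by omega⟩) (g ⟨t + 1, ht⟩)) :
    ∃ a b, ∃ p : G.Walk a b, p.IsHamiltonian := by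
  have hne : List.ofFn g ≠ [] := by simp [NeZero.ne M]
  refine ⟨_, _, Walk.ofSupport _ hne (List.isChain_ofFn.mpr hadj), fun v => ?_⟩
  rw [Walk.support_ofSupport]
  exact List.count_eq_one_of_mem (List.nodup_ofFn.mpr hg.injective)
    (List.mem_ofFn.mpr (hg.surjective v))

variable [Fintype V]

lemma Walk.IsHamiltonianCycle.exists_bijective {a : V} {p : G.Walk a a}
    (hp : p.IsHamiltonianCycle) :
    ∃ f : ZMod p.length → V, Bijective f ∧ ∀ t, G.Adj (f t) (f (t + 1)) := by
  have h3 := hp.isCycle.three_le_length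
  obtain ⟨c⟩ := (cycleGraph_isContained_iff h3).mpr ⟨a, p, hp.isCycle, rfl⟩
  have hcard := hp.length_eq
  generalize p.length = N at *
  obtain ⟨m, rfl⟩ : ∃ m, N = m + 2 := ⟨N - 2, by omega⟩
  let e := (ZMod.finEquiv (m + 2)).symm
  refine ⟨c ∘ e, ?_, fun t => ?_⟩
  · rw [Fintype.bijective_iff_injective_and_card]
    exact ⟨c.injective.comp e.injective, by simp [hcard]⟩
  · simpa [e] using c.toHom.map_adj (cycleGraph_adj_add_one (e t))

theorem Walk.IsHamiltonianCycle.exists_isHamiltonianCycle_bipartiteDoubleCover {a : V}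
    {p : G.Walk a a} (hp : p.IsHamiltonianCycle) (hodd : Odd p.length) :
    ∃ b, ∃ q : G.bipartiteDoubleCover.Walk b b, q.IsHamiltonianCycle := by
  obtain ⟨f, hf, hadj⟩ := hp.exists_bijective
  have h3 := hp.isCycle.three_le_length
  have : NeZero (2 * p.length) := ⟨by omega⟩
  -- `N` is odd, so `t ↦ (t mod 2, t mod N)` is a bijection `ZMod (2N) ≃ ZMod 2 × ZMod N`.
  let crt := ZMod.chineseRemainder (Nat.coprime_two_left.mpr hodd)
  let e := zmodTwoProdEquivSum V
  refine exists_isHamiltonianCycle_of_bijective (f := fun t => e ((crt t).1, f (crt t).2))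
    (by omega) (e.bijective.comp ((bijective_id.prodMap hf).comp crt.bijective)) fun t => ?_
  simpa using bipartiteDoubleCover_adj_zmodTwoProdEquivSum (crt t).1 (hadj (crt t).2)

theorem exists_isHamiltonian_bipartiteDoubleCover {N : ℕ} [NeZero N] (h2 : 2 ∣ N)
    {f : ZMod N → V} (hf : Bijective f) (hadj : ∀ t, G.Adj (f t) (f (t + 1))) {i j : ZMod N}
    (hij : ZMod.castHom h2 (ZMod 2) i = ZMod.castHom h2 (ZMod 2) j) (hchord : G.Adj (f i) (f j)) :
    ∃ a b, ∃ p : G.bipartiteDoubleCover.Walk a b, p.IsHamiltonian := by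
  set ρ := ZMod.castHom h2 (ZMod 2)
  set e := zmodTwoProdEquivSum V
  let lift (b : ZMod 2) (x : ZMod N) : V ⊕ V := e (ρ x + b, f x)
  have lift_adj (b x) : G.bipartiteDoubleCover.Adj (lift b x) (lift b (x + 1)) := by
    simpa [lift, add_right_comm] using
      bipartiteDoubleCover_adj_zmodTwoProdEquivSum (ρ x + b) (hadj x)
  have lift_inj {b b' x x'} (h : lift b x = lift b' x') : b = b' ∧ x = x' := by
    obtain ⟨hb, hx⟩ := Prod.ext_iff.mp (e.injective h)
    obtain rfl := hf.injective hx
    exact ⟨add_left_cancel hb, rfl⟩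
  have cast_inj {s t : ℕ} (hs : s < N) (ht : t < N) (h : (s : ZMod N) = t) : s = t := by
    simpa [ZMod.natCast_eq_natCast_iff', Nat.mod_eq_of_lt hs, Nat.mod_eq_of_lt ht] using h
  -- Once around the cycle on the sheets `ρ x`, ending at `f i`; across the chord to `f j`;
  -- once around the cycle on the sheets `ρ x + 1`.
  let g (t : Fin (2 * N)) : V ⊕ V :=
    if t.val < N then lift 0 (i + 1 + t.val) else lift 1 (j + (t.val - N : ℕ))
  have hg : Injective g := by
    intro s t hst
    simp only [g] at hst
    split_ifs at hst with hs ht ht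
    · exact Fin.ext (cast_inj hs ht (add_left_cancel (lift_inj hst).2))
    · exact absurd (lift_inj hst).1 (by decide)
    · exact absurd (lift_inj hst).1 (by decide)
    · have := cast_inj (by omega) (by omega) (add_left_cancel (lift_inj hst).2)
      omega
  refine exists_isHamiltonian_of_bijective (g := g) ?_ fun t ht => ?_
  · rw [Fintype.bijective_iff_injective_and_card]
    refine ⟨hg, ?_⟩
    simp [Fintype.card_sum, ← Fintype.card_of_bijective hf]
    ring
  · simp only [g]
    rcases lt_trichotomy (t + 1) N with h | h | h
    · rw [if_pos (by omega), if_pos h]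
      simpa [add_assoc] using lift_adj 0 (i + 1 + t)
    · rw [if_pos (by omega), if_neg (by omega)]
      have hwrap : (t : ZMod N) + 1 = 0 := by rw [← Nat.cast_add_one, h, ZMod.natCast_self]
      rw [show t + 1 - N = 0 by omega, add_assoc, add_comm 1, hwrap]
      simpa [lift, hij] using bipartiteDoubleCover_adj_zmodTwoProdEquivSum (ρ j) hchord
    · rw [if_neg (by omega), if_neg (by omega), show t + 1 - N = t - N + 1 by omega]
      simpa [add_assoc] using lift_adj 1 (j + (t - N : ℕ))

end SimpleGraph

lemma Nat.two_mul_choose_pred_lt_choose {n k : ℕ} (hk : 1 ≤ k) (hn : 2 * k < n) :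
    2 * (n - 1).choose (k - 1) < n.choose k := by
  have hpos : 0 < (n - 1).choose (k - 1) := Nat.choose_pos (by omega)
  have hid := Nat.add_one_mul_choose_eq (n - 1) (k - 1)
  rw [Nat.sub_add_cancel (by omega), Nat.sub_add_cancel hk] at hid
  refine Nat.lt_of_mul_lt_mul_right (a := k) ?_
  calc 2 * (n - 1).choose (k - 1) * k = 2 * k * (n - 1).choose (k - 1) := by ring
    _ < n * (n - 1).choose (k - 1) := Nat.mul_lt_mul_of_pos_right hn hpos
    _ = n.choose k * k := hid

namespace kneserGraph

variable {n k : ℕ}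

lemma exists_adj_of_choose_lt (hk : 1 ≤ k) (hn : 2 * k ≤ n)
    {s : Finset {A : Finset (Fin n) // A.card = k}} (hs : (n - 1).choose (k - 1) < #s) :
    ∃ A ∈ s, ∃ B ∈ s, (kneserGraph n k).Adj A B := by
  by_contra! hs_indep
  set 𝒜 := s.map (Embedding.subtype _)
  have hint : (𝒜 : Set (Finset (Fin n))).Intersecting := by
    simp only [𝒜, coe_map, Embedding.coe_subtype]
    rintro _ ⟨A, hA, rfl⟩ _ ⟨B, hB, rfl⟩ hAB
    refine hs_indep A hA B hB ⟨?_, hAB⟩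
    rintro rfl
    have hA := A.2
    rw [(disjoint_self_iff_empty _).mp hAB, card_empty] at hA
    omega
  have hsized : (𝒜 : Set (Finset (Fin n))).Sized k := by
    simp only [𝒜, coe_map, Embedding.coe_subtype]
    rintro _ ⟨A, -, rfl⟩
    exact A.2
  have := Finset.erdos_ko_rado hint hsized (by omega)
  rw [card_map] at this
  omega

lemma exists_castHom_eq_and_adj (hk : 1 ≤ k) (hn : 2 * k < n) {N : ℕ} [NeZero N] (h2 : 2 ∣ N)
    {f : ZMod N → {A : Finset (Fin n) // A.card = k}} (hf : Bijective f) :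
    ∃ i j, ZMod.castHom h2 (ZMod 2) i = ZMod.castHom h2 (ZMod 2) j ∧
      (kneserGraph n k).Adj (f i) (f j) := by
  have hN : N = n.choose k := by
    simpa [Fintype.card_finset_len] using Fintype.card_of_bijective hf
  let even (t : ℕ) : ZMod N := (2 * t : ℕ)
  have hinj : Set.InjOn (f ∘ even) (range (N / 2)) := by
    intro s hs t ht hst
    simp only [coe_range, Set.mem_Iio] at hs ht
    have := hf.injective hst
    simp only [even, ZMod.natCast_eq_natCast_iff', Nat.mod_eq_of_lt (show 2 * s < N by omega),
      Nat.mod_eq_of_lt (show 2 * t < N by omega)] at this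
    omega
  have hcard : (n - 1).choose (k - 1) < #((range (N / 2)).image (f ∘ even)) := by
    rw [card_image_of_injOn hinj, card_range]
    have := Nat.two_mul_choose_pred_lt_choose hk hn
    omega
  obtain ⟨_, hA, _, hB, hAB⟩ := exists_adj_of_choose_lt hk hn.le hcard
  obtain ⟨s, -, rfl⟩ := mem_image.mp hA
  obtain ⟨t, -, rfl⟩ := mem_image.mp hB
  refine ⟨_, _, ?_, hAB⟩
  simp only [even, map_natCast, ZMod.natCast_eq_natCast_iff']
  omega

lemma val_ne_compl_val (hn : 2 * k < n) (A B : {A : Finset (Fin n) // A.card = k}) :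
    A.1 ≠ B.1ᶜ := by
  intro h
  have := congrArg card h
  rw [card_compl, Fintype.card_fin, A.2, B.2] at this
  omega

def bipartiteDoubleCoverHom (hn : 2 * k < n) :
    (kneserGraph n k).bipartiteDoubleCover →g bipartiteKneserGraph n k where
  toFun
    | .inl A => ⟨A.1, .inl A.2⟩
    | .inr A => ⟨A.1ᶜ, .inr (by rw [card_compl, Fintype.card_fin, A.2])⟩
  map_rel' := by
    rintro (A | A) (B | B) h
    · exact h.elim
    · exact ⟨fun h' => val_ne_compl_val hn A B (congrArg Subtype.val h'),
        .inl (subset_compl_iff_disjoint_right.mpr h.2)⟩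
    · exact ⟨fun h' => val_ne_compl_val hn B A (congrArg Subtype.val h').symm,
        .inr (subset_compl_iff_disjoint_right.mpr h.2.symm)⟩
    · exact h.elim

lemma bijective_bipartiteDoubleCoverHom (hn : 2 * k < n) :
    Bijective (bipartiteDoubleCoverHom hn) := by
  constructor
  · rintro (A | A) (B | B) h <;>
      simp only [bipartiteDoubleCoverHom, RelHom.coeFn_mk, Subtype.mk.injEq] at h
    · exact congrArg Sum.inl (Subtype.ext h)
    · exact (val_ne_compl_val hn A B h).elim
    · exact (val_ne_compl_val hn B A h.symm).elim
    · exact congrArg Sum.inr (Subtype.ext (compl_injective h))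
  · rintro ⟨A, hA | hA⟩
    · exact ⟨.inl ⟨A, hA⟩, rfl⟩
    · refine ⟨.inr ⟨Aᶜ, by rw [card_compl, Fintype.card_fin, hA]; omega⟩, ?_⟩
      exact Subtype.ext (compl_compl A)

end kneserGraph

/-- If `K(n,k)` admits a Hamilton cycle, then `H(n,k)` admits a Hamilton cycle
or a Hamilton path. -/
theorem bipartite_kneser_of_kneser (n k : ℕ) (hk : 1 ≤ k) (hn : 2 * k + 1 ≤ n)
    (hK : ∃ (a : {A : Finset (Fin n) // A.card = k}) (p : (kneserGraph n k).Walk a a),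
      p.IsHamiltonianCycle) :
    (∃ (a : {A : Finset (Fin n) // A.card = k ∨ A.card = n - k})
        (p : (bipartiteKneserGraph n k).Walk a a), p.IsHamiltonianCycle) ∨
    (∃ (a b : {A : Finset (Fin n) // A.card = k ∨ A.card = n - k})
        (p : (bipartiteKneserGraph n k).Walk a b), p.IsHamiltonian) := by
  obtain ⟨a, p, hp⟩ := hK
  have hφ := kneserGraph.bijective_bipartiteDoubleCoverHom (show 2 * k < n by omega)
  rcases Nat.even_or_odd p.length with heven | hodd
  · right
    have : NeZero p.length := ⟨by have := hp.isCycle.three_le_length; omega⟩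
    obtain ⟨f, hf, hadj⟩ := hp.exists_bijective
    obtain ⟨i, j, hij, hchord⟩ :=
      kneserGraph.exists_castHom_eq_and_adj hk (by omega) heven.two_dvd hf
    obtain ⟨u, v, q, hq⟩ :=
      SimpleGraph.exists_isHamiltonian_bipartiteDoubleCover heven.two_dvd hf hadj hij hchord
    exact ⟨_, _, q.map _, hq.map _ hφ⟩
  · left
    obtain ⟨u, q, hq⟩ := hp.exists_isHamiltonianCycle_bipartiteDoubleCover hodd
    exact ⟨_, q.map _, hq.map hφ⟩
end

section
/- If the generalized Johnson graphs J(n-1,k-1,s-1) and J(n-1,k,s) both have Hamilton cycles, then J(n,k,s) also has a Hamilton cycle. -/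
/-!
The sets containing the last element span a copy of `J(n-1,k-1,s-1)`, the others a copy of
`J(n-1,k,s)`, and these two copies partition the vertices of `J(n,k,s)`. Cut each Hamilton cycle
open at an edge, `X - Y` in the first copy and `A - B` in the second, and close up the two Hamilton
paths with the cross edges `A ∪ {n} - Y` and `X - B ∪ {n}`; these are edges when
`|A ∩ Y| = |B ∩ X| = s`. Such a pair `(A, B)` with `|A ∩ B| = s - 1` is written down explicitly
from `X` and `Y`, and by edge-transitivity of `J(n-1,k-1,s-1)` the second cycle may be assumed to
pass through it.
-/

/-- The generalized Johnson graph `J(n,k,s)`. -/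
def johnsonGraph (n k s : ℕ) : SimpleGraph {A : Finset (Fin n) // A.card = k} where
  Adj A B := A ≠ B ∧ (A.1 ∩ B.1).card = s
  symm := by
    constructor
    intro A B h
    exact ⟨h.1.symm, by rw [Finset.inter_comm]; exact h.2⟩
  loopless := by constructor; intro A h; exact h.1 rfl

open Function

namespace SimpleGraph.Walk

variable {V : Type*} [DecidableEq V] {G : SimpleGraph V}

theorem cons_isHamiltonianCycle_iff {u v : V} (h : G.Adj u v) (p : G.Walk v u) :
    (cons h p).IsHamiltonianCycle ↔ p.IsHamiltonian ∧ s(u, v) ∉ p.edges := by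
  rw [isHamiltonianCycle_iff_isCycle_and_support_count_tail_eq_one, cons_isCycle_iff,
    support_cons, List.tail_cons]
  exact ⟨fun ⟨⟨_, he⟩, hp⟩ => ⟨hp, he⟩, fun ⟨hp, he⟩ => ⟨⟨hp.isPath, he⟩, hp⟩⟩

section map

variable {W : Type*} {H : SimpleGraph W} {u v : W} {f : H →g G}

theorem IsHamiltonian.count_support_map_apply [DecidableEq W] {p : H.Walk u v}
    (hp : p.IsHamiltonian) (hf : Injective f) (w : W) : (p.map f).support.count (f w) = 1 := by
  rw [support_map, List.count_map_of_injective _ _ hf, hp]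

theorem count_support_map_of_notMem_range (p : H.Walk u v) {w : V} (hw : w ∉ Set.range f) :
    (p.map f).support.count w = 0 := by
  rw [List.count_eq_zero, support_map, List.mem_map]
  rintro ⟨w', -, rfl⟩
  exact hw ⟨w', rfl⟩

end map

theorem exists_isHamiltonianCycle_of_isCompl_range {V₀ V₁ : Type*} [DecidableEq V₀]
    [DecidableEq V₁] {H₀ : SimpleGraph V₀} {H₁ : SimpleGraph V₁} {f₀ : H₀ →g G} {f₁ : H₁ →g G}
    (hf₀ : Injective f₀) (hf₁ : Injective f₁) (hf : IsCompl (Set.range f₀) (Set.range f₁))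
    {x y : V₀} {a b : V₁} (hxy : x ≠ y) {p₀ : H₀.Walk y x} (hp₀ : p₀.IsHamiltonian)
    {p₁ : H₁.Walk b a} (hp₁ : p₁.IsHamiltonian) (hay : G.Adj (f₁ a) (f₀ y))
    (hxb : G.Adj (f₀ x) (f₁ b)) :
    ∃ (v : V) (c : G.Walk v v), c.IsHamiltonianCycle := by
  let q := (p₀.map f₀).append (cons hxb (p₁.map f₁))
  have hq : q.IsHamiltonian := fun w => by
    rw [support_append, support_cons, List.tail_cons, List.count_append]
    by_cases hw : w ∈ Set.range f₀
    · obtain ⟨w, rfl⟩ := hw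
      rw [hp₀.count_support_map_apply hf₀,
        count_support_map_of_notMem_range _ (hf.disjoint.notMem_of_mem_left ⟨w, rfl⟩)]
    · obtain ⟨w, rfl⟩ : w ∈ Set.range f₁ := hf.compl_eq ▸ hw
      rw [count_support_map_of_notMem_range _ hw, hp₁.count_support_map_apply hf₁]
  refine ⟨_, cons hay q, (cons_isHamiltonianCycle_iff hay q).2 ⟨hq, fun he => hxy ?_⟩⟩
  have hlen := hq.isPath.length_eq_one_of_mem_edges (Sym2.eq_swap ▸ he)
  rw [length_append, length_cons, length_map] at hlen
  exact (eq_of_length_eq_zero (p := p₀) (by omega)).symm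

end SimpleGraph.Walk

open Finset

theorem Equiv.Perm.exists_comp_eq_of_card_fiber_eq {α β : Type*} [Fintype α] [DecidableEq β]
    {f g : α → β} (h : ∀ c, Fintype.card {a // f a = c} = Fintype.card {a // g a = c}) :
    ∃ σ : Equiv.Perm α, ∀ a, g (σ a) = f a :=
  ⟨Equiv.ofFiberEquiv fun c => Fintype.equivOfCardEq (h c), Equiv.ofFiberEquiv_map _⟩

section Fintype

variable {α : Type*} [Fintype α] [DecidableEq α]

theorem Finset.card_fiber_mem_mem (A B : Finset α) (c : Bool × Bool) :
    Fintype.card {x // (decide (x ∈ A), decide (x ∈ B)) = c} =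
      match c with
      | (true, true) => #(A ∩ B)
      | (true, false) => #A - #(A ∩ B)
      | (false, true) => #B - #(A ∩ B)
      | (false, false) => Fintype.card α - (#A + #B - #(A ∩ B)) := by
  rcases c with ⟨_ | _, _ | _⟩ <;>
    simp only [Fintype.card_subtype, Prod.mk.injEq, decide_eq_true_eq, decide_eq_false_iff_not]
  · rw [← card_union, ← card_compl]; congr 1; ext; simp
  · rw [← card_sdiff]; congr 1; ext; simp [and_comm]
  · rw [inter_comm, ← card_sdiff]; congr 1; ext; simp
  · congr 1; ext; simp

theorem Finset.exists_perm_map_eq_map_eq {A B C D : Finset α} (hAC : #A = #C) (hBD : #B = #D)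
    (hI : #(A ∩ B) = #(C ∩ D)) :
    ∃ σ : Equiv.Perm α, A.map σ.toEmbedding = C ∧ B.map σ.toEmbedding = D := by
  obtain ⟨σ, hσ⟩ := Equiv.Perm.exists_comp_eq_of_card_fiber_eq
    (f := fun x => (decide (x ∈ A), decide (x ∈ B)))
    (g := fun x => (decide (x ∈ C), decide (x ∈ D)))
    fun c => by rw [card_fiber_mem_mem, card_fiber_mem_mem, hAC, hBD, hI]
  simp only [Prod.mk.injEq, decide_eq_decide] at hσ
  refine ⟨σ, ?_, ?_⟩ <;> ext y <;> simp [mem_map_equiv, ← hσ (σ.symm y)]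

end Fintype

theorem Finset.exists_card_inter_eq_of_card_inter_eq {α : Type*} [DecidableEq α] {X Y : Finset α} {k s : ℕ}
    (hX : #X = k + 1) (hY : #Y = k + 1) (hXY : #(X ∩ Y) = s + 1) (hsk : s < k) :
    ∃ C D : Finset α, #C = k ∧ #D = k ∧ #(C ∩ D) = s ∧ #(C ∩ Y) = s + 1 ∧ #(D ∩ X) = s + 1 := by
  have hX_sdiff : #(X \ Y) = k - s := by rw [card_sdiff, inter_comm, hXY, hX]; omega
  have hY_sdiff : #(Y \ X) = k - s := by rw [card_sdiff, hXY, hY]; omega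
  obtain ⟨i, hi⟩ : (X ∩ Y).Nonempty := card_pos.1 (by omega)
  obtain ⟨z, hz⟩ : (X \ Y).Nonempty := card_pos.1 (by omega)
  obtain ⟨w, hw⟩ : (Y \ X).Nonempty := card_pos.1 (by omega)
  simp only [mem_inter, mem_sdiff] at hi hz hw
  refine ⟨X.erase z, insert z ((Y.erase i).erase w), ?_, ?_, ?_, ?_, ?_⟩
  · rw [card_erase_of_mem hz.1, hX]; rfl
  · rw [card_insert_of_notMem (by simp [hz.2]),
      card_erase_of_mem (mem_erase.2 ⟨by rintro rfl; exact hw.2 hi.1, hw.1⟩),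
      card_erase_of_mem hi.2, hY]
    omega
  · have : X.erase z ∩ insert z ((Y.erase i).erase w) = (X ∩ Y).erase i := by
      ext a; simp only [mem_inter, mem_erase, mem_insert]; grind
    rw [this, card_erase_of_mem (mem_inter.2 hi), hXY]; rfl
  · have : X.erase z ∩ Y = X ∩ Y := by
      ext a; simp only [mem_inter, mem_erase]; grind
    rw [this, hXY]
  · have : insert z ((Y.erase i).erase w) ∩ X = insert z ((X ∩ Y).erase i) := by
      ext a; simp only [mem_inter, mem_erase, mem_insert]; grind
    rw [this, card_insert_of_notMem (by simp [hz.2]), card_erase_of_mem (mem_inter.2 hi), hXY]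
    rfl

namespace johnsonGraph

variable {n k s : ℕ}

def relabel (σ : Equiv.Perm (Fin n)) : johnsonGraph n k s ≃g johnsonGraph n k s where
  toEquiv := σ.finsetCongr.subtypeEquiv fun A => by simp
  map_rel_iff' := and_congr (Equiv.injective _).ne_iff (by simp [← map_inter])

theorem exists_iso_apply_eq_of_adj {A B C D : {A : Finset (Fin n) // #A = k}}
    (hAB : (johnsonGraph n k s).Adj A B) (hCD : (johnsonGraph n k s).Adj C D) :
    ∃ φ : johnsonGraph n k s ≃g johnsonGraph n k s, φ A = C ∧ φ B = D := by
  obtain ⟨σ, hA, hB⟩ := exists_perm_map_eq_map_eq (A.2.trans C.2.symm) (B.2.trans D.2.symm)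
    (hAB.2.trans hCD.2.symm)
  exact ⟨relabel σ, Subtype.ext hA, Subtype.ext hB⟩

def castSucc (A : {A : Finset (Fin n) // #A = k}) : {A : Finset (Fin (n + 1)) // #A = k} :=
  ⟨A.1.map Fin.castSuccEmb, by simp [A.2]⟩

def insertLast (A : {A : Finset (Fin n) // #A = k}) :
    {A : Finset (Fin (n + 1)) // #A = k + 1} :=
  ⟨insert (Fin.last n) (A.1.map Fin.castSuccEmb), by simp [A.2]⟩

@[simp]
theorem coe_castSucc (A : {A : Finset (Fin n) // #A = k}) :
    (castSucc A).1 = A.1.map Fin.castSuccEmb :=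
  rfl

@[simp]
theorem coe_insertLast (A : {A : Finset (Fin n) // #A = k}) :
    (insertLast A).1 = insert (Fin.last n) (A.1.map Fin.castSuccEmb) :=
  rfl

theorem castSucc_injective : Injective (castSucc (n := n) (k := k)) :=
  fun _ _ h => Subtype.ext (by simpa using congr(($h).1))

theorem insertLast_injective : Injective (insertLast (n := n) (k := k)) :=
  fun _ _ h => Subtype.ext (by simpa using congr(($h).1.erase (Fin.last n)))

def castSuccHom : johnsonGraph n k s →g johnsonGraph (n + 1) k s where
  toFun := castSucc
  map_rel' h := ⟨castSucc_injective.ne h.1, by simp [← map_inter, h.2]⟩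

def insertLastHom : johnsonGraph n k s →g johnsonGraph (n + 1) (k + 1) (s + 1) where
  toFun := insertLast
  map_rel' h := ⟨insertLast_injective.ne h.1, by simp [← map_inter, h.2]⟩

theorem range_castSucc : Set.range (castSucc (n := n) (k := k)) = {A | Fin.last n ∉ A.1} := by
  ext A
  constructor
  · rintro ⟨B, rfl⟩
    simp
  · intro hA
    have hA' : A.1 ⊆ univ.map Fin.castSuccEmb := fun x hx => by
      simpa [Fin.exists_castSucc_eq] using ne_of_mem_of_not_mem hx hA
    obtain ⟨B, -, hB⟩ := subset_map_iff.1 hA'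
    exact ⟨⟨B, by rw [← A.2, hB, card_map]⟩, Subtype.ext hB.symm⟩

theorem range_insertLast :
    Set.range (insertLast (n := n) (k := k)) = {A | Fin.last n ∈ A.1} := by
  ext A
  constructor
  · rintro ⟨B, rfl⟩
    simp
  · intro hA
    obtain ⟨B, hB⟩ : (⟨A.1.erase (Fin.last n), by simp [card_erase_of_mem hA, A.2]⟩ :
        {A : Finset (Fin (n + 1)) // #A = k}) ∈ Set.range castSucc := by
      simp [range_castSucc]
    refine ⟨B, Subtype.ext ?_⟩
    rw [coe_insertLast, ← coe_castSucc, hB, insert_erase hA]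

theorem isCompl_range_castSucc_insertLast :
    IsCompl (Set.range (castSucc (n := n) (k := k + 1))) (Set.range (insertLast (n := n))) := by
  rw [range_castSucc, range_insertLast]
  exact isCompl_compl.symm

theorem insertLast_adj_castSucc {C : {A : Finset (Fin n) // #A = k}}
    {Y : {A : Finset (Fin n) // #A = k + 1}} (h : #(C.1 ∩ Y.1) = s + 1) :
    (johnsonGraph (n + 1) (k + 1) (s + 1)).Adj (insertLast C) (castSucc Y) := by
  refine ⟨fun h' => ?_, ?_⟩
  · simpa using congr(Fin.last n ∈ ($h').1)
  · simp [insert_inter_of_notMem, ← map_inter, h]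

theorem exists_adj_insertLast_adj_castSucc {X Y : {A : Finset (Fin n) // #A = k + 1}}
    (hXY : (johnsonGraph n (k + 1) (s + 1)).Adj X Y) (hsk : s < k) :
    ∃ C D, (johnsonGraph n k s).Adj C D ∧
      (johnsonGraph (n + 1) (k + 1) (s + 1)).Adj (insertLast C) (castSucc Y) ∧
      (johnsonGraph (n + 1) (k + 1) (s + 1)).Adj (castSucc X) (insertLast D) := by
  obtain ⟨C, D, hC, hD, hCD, hCY, hDX⟩ :=
    exists_card_inter_eq_of_card_inter_eq X.2 Y.2 hXY.2 hsk
  refine ⟨⟨C, hC⟩, ⟨D, hD⟩, ⟨fun h => ?_, hCD⟩, insertLast_adj_castSucc hCY,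
    (insertLast_adj_castSucc hDX).symm⟩
  obtain rfl : C = D := congr($h.1)
  rw [inter_self, hC] at hCD
  omega

end johnsonGraph

open johnsonGraph SimpleGraph.Walk in
/-- If `J(n-1,k-1,s-1)` and `J(n-1,k,s)` both have Hamilton cycles, then `J(n,k,s)`
also has a Hamilton cycle. -/
theorem johnson_inductive_step (n k s : ℕ) (hs : 1 ≤ s) (hsk : s < k)
    (h1 : ∃ (a : {A : Finset (Fin (n - 1)) // A.card = k - 1})
        (p : (johnsonGraph (n - 1) (k - 1) (s - 1)).Walk a a), p.IsHamiltonianCycle)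
    (h0 : ∃ (a : {A : Finset (Fin (n - 1)) // A.card = k})
        (p : (johnsonGraph (n - 1) k s).Walk a a), p.IsHamiltonianCycle) :
    ∃ (a : {A : Finset (Fin n) // A.card = k})
        (p : (johnsonGraph n k s).Walk a a), p.IsHamiltonianCycle := by
  obtain ⟨X, c₀, hc₀⟩ := h0
  -- the truncated `n - 1` is `0` at `n = 0`, where there is no `k`-set `X`
  obtain ⟨m, rfl⟩ : ∃ m, n = m + 1 :=
    ⟨n - 1, by have := X.1.card_le_univ; simp [X.2] at this; omega⟩
  obtain ⟨s, rfl⟩ := Nat.exists_eq_add_of_le' hs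
  obtain ⟨k, rfl⟩ : ∃ k', k = k' + 1 := ⟨k - 1, by omega⟩
  obtain ⟨A, c₁, hc₁⟩ := h1
  have hXY := c₀.adj_snd hc₀.not_nil
  obtain ⟨C, D, hCD, hCY, hXD⟩ := exists_adj_insertLast_adj_castSucc hXY (by omega)
  obtain ⟨φ, rfl, hφ⟩ := exists_iso_apply_eq_of_adj (c₁.adj_snd hc₁.not_nil) hCD
  exact exists_isHamiltonianCycle_of_isCompl_range (f₀ := castSuccHom) (f₁ := insertLastHom)
    castSucc_injective insertLast_injective isCompl_range_castSucc_insertLast hXY.ne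
    hc₀.isHamiltonian_tail (hc₁.isHamiltonian_tail.map φ.toHom φ.bijective) hCY (hφ ▸ hXD)
end

section
/- Every hill y ∈ D' of height h ≥ 2 decomposes uniquely as y = 1 u_1 1 u_2 ⋯ 1 u_{h-2} 1 1 v_0 0 v_1 0 ⋯ 0 v_{h-2} 0 0 with u_1,...,u_{h-2} ∈ D and complement(v_0),...,complement(v_{h-2}) ∈ D, where the i-th bulge u_i has height at most h-1-i for i = 1,...,h-2 and the i-th dent v_i has depth at most h-1-i for i = 0,...,h-2. For h = 1, y = 10 has no bulges or dents. -/
/-- A Dyck word: equal numbers of 1s (`true`) and 0s (`false`), with every prefix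
containing at least as many 1s as 0s. -/
def IsDyck (w : List Bool) : Prop :=
  w.count true = w.count false ∧
    ∀ i, (w.take i).count false ≤ (w.take i).count true

/-- A word in `D'`: a nonempty Dyck word with strictly more 1s than 0s in every proper
nonempty prefix, i.e. a word of the form `1 u 0` with `u ∈ D`. -/
def IsPrimeDyck (w : List Bool) : Prop :=
  IsDyck w ∧ w ≠ [] ∧ ∀ i, 0 < i → i < w.length →
    (w.take i).count false < (w.take i).count true

/-- The height of a lattice path (1 = up-step, 0 = down-step): the maximal value of
(#1s − #0s) over all prefixes. -/
def heightList (w : List Bool) : ℕ :=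
  Finset.sup (Finset.range (w.length + 1))
    (fun i => (w.take i).count true - (w.take i).count false)

/-- The word `1 u_1 1 u_2 ⋯ 1 u_{h-2} 1 1 v_0 0 v_1 0 ⋯ 0 v_{h-2} 0 0` built from the
bulges `us = [u_1,…,u_{h-2}]` and the dents `vs = [v_0,…,v_{h-2}]`. -/
def hillWord (us vs : List (List Bool)) : List Bool :=
  (us.map (fun u => true :: u)).flatten ++ [true, true] ++
    (vs.map (fun v => v ++ [false])).flatten ++ [false]

/-!
Write `y = 1 z 0` with `z ∈ D` of height `h - 1` and cut `z = M 1 N` at its leftmost highest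
point. Then `M` is a path from level `0` to `h - 2` inside the strip `[0, h - 2]`, and the
complement of `N` a path from `0` to `h - 1` inside `[0, h - 1]`. A path from `0` to `m` inside
`[0, m]` factors uniquely as `u_0 1 u_1 1 ⋯ u_{m-1} 1` by cutting after its last visit to each
level `j < m`; the factor `u_j` is a Dyck word starting at level `j`, so its height is at most
`m - j`. These factors are the bulges of `M` and the complemented dents of `N`.
-/

namespace List

variable {α : Type*} {P : List α → Prop}

lemma forall_prefix_iff_forall_take {w : List α} :
    (∀ p, p <+: w → P p) ↔ ∀ i, P (w.take i) :=
  ⟨fun h i => h _ (take_prefix i w), fun h _ hp => prefix_iff_eq_take.1 hp ▸ h _⟩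

lemma forall_prefix_cons {a : α} {w : List α} :
    (∀ p, p <+: a :: w → P p) ↔ P [] ∧ ∀ q, q <+: w → P (a :: q) := by
  refine ⟨fun h => ⟨h [] nil_prefix, fun q hq => h _ (cons_prefix_cons.2 ⟨rfl, hq⟩)⟩,
    fun ⟨h₀, h⟩ p hp => ?_⟩
  rcases prefix_cons_iff.1 hp with rfl | ⟨q, rfl, hq⟩
  exacts [h₀, h q hq]

lemma forall_prefix_append {u w : List α} :
    (∀ p, p <+: u ++ w → P p) ↔
      (∀ p, p <+: u → P p) ∧ ∀ q, q <+: w → P (u ++ q) := by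
  refine ⟨fun h => ⟨fun p hp => h p (hp.trans (prefix_append u w)),
    fun q hq => h _ ((prefix_append_right_inj u).2 hq)⟩, fun ⟨hu, hw⟩ p hp => ?_⟩
  rcases prefix_or_prefix_of_prefix hp (prefix_append u w) with h | ⟨q, rfl⟩
  · exact hu p h
  · exact hw q ((prefix_append_right_inj u).1 hp)

lemma append_cons_eq_append_cons {u u' w w' : List α} {b : α}
    (h : u ++ b :: w = u' ++ b :: w') :
    u = u' ∧ w = w' ∨ (∃ t, u' = u ++ b :: t ∧ t <+: w) ∨
      ∃ t, u = u' ++ b :: t ∧ t <+: w' := by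
  rcases append_eq_append_iff.1 h with ⟨_ | ⟨c, t⟩, rfl, ht⟩ | ⟨_ | ⟨c, t⟩, rfl, ht⟩
  · simp_all
  · obtain ⟨rfl, rfl⟩ := cons_eq_cons.1 ht
    exact .inr (.inl ⟨t, rfl, prefix_append t _⟩)
  · simp_all
  · obtain ⟨rfl, rfl⟩ := cons_eq_cons.1 ht
    exact .inr (.inr ⟨t, rfl, prefix_append t _⟩)

end List

def drift (w : List Bool) : ℤ := w.count true - w.count false

@[simp] lemma drift_nil : drift [] = 0 := by simp [drift]

@[simp] lemma drift_cons_true (w : List Bool) : drift (true :: w) = drift w + 1 := by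
  simp [drift, add_sub_right_comm]

@[simp] lemma drift_cons_false (w : List Bool) : drift (false :: w) = drift w - 1 := by
  simp [drift, sub_add_eq_sub_sub]

@[simp] lemma drift_append (u w : List Bool) : drift (u ++ w) = drift u + drift w := by
  simp only [drift, List.count_append, Nat.cast_add]
  ring

@[simp] lemma drift_map_not (w : List Bool) : drift (w.map not) = -drift w := by
  induction w with
  | nil => simp
  | cons b w ih => cases b <;> simp [ih, neg_add_eq_sub]

lemma isDyck_iff {w : List Bool} :
    IsDyck w ↔ drift w = 0 ∧ ∀ p, p <+: w → 0 ≤ drift p := by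
  simp [IsDyck, drift, List.forall_prefix_iff_forall_take, sub_eq_zero]

lemma heightList_le_iff {w : List Bool} {c : ℕ} :
    heightList w ≤ c ↔ ∀ p, p <+: w → drift p ≤ c := by
  rw [heightList, Finset.sup_le_iff, List.forall_prefix_iff_forall_take]
  refine ⟨fun h i => ?_, fun h i _ => ?_⟩
  · rcases le_total i w.length with hi | hi
    · have := h i (by rw [Finset.mem_range]; omega)
      simp only [drift]
      omega
    · have := h w.length (by simp)
      simp only [drift, List.take_of_length_le hi, List.take_length] at this ⊢
      omega
  · have := h i
    simp only [drift] at this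
    omega

lemma drift_le_heightList {p w : List Bool} (hp : p <+: w) : drift p ≤ heightList w :=
  heightList_le_iff.1 le_rfl p hp

def IsBoundedPath (m : ℕ) (w : List Bool) : Prop :=
  drift w = m ∧ ∀ p, p <+: w → 0 ≤ drift p ∧ drift p ≤ m

lemma isBoundedPath_zero_iff {w : List Bool} : IsBoundedPath 0 w ↔ w = [] := by
  refine ⟨fun ⟨_, hw⟩ => ?_, fun h => by simp [h, IsBoundedPath]⟩
  rcases w with _ | ⟨b, w⟩
  · rfl
  · have := hw [b] (List.cons_prefix_cons.2 ⟨rfl, List.nil_prefix⟩)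
    cases b <;> simp at this

lemma IsBoundedPath.append_true_cancel {m : ℕ} {u u' w w' : List Bool} (hu : IsBoundedPath m u)
    (hu' : IsBoundedPath m u') (h : u ++ true :: w = u' ++ true :: w') : u = u' ∧ w = w' := by
  rcases List.append_cons_eq_append_cons h with h | ⟨t, rfl, -⟩ | ⟨t, rfl, -⟩
  · exact h
  · have := (hu'.2 (u ++ [true]) (by simp)).2
    simp [hu.1] at this
  · have := (hu.2 (u' ++ [true]) (by simp)).2
    simp [hu'.1] at this

lemma IsDyck.append_true_cancel {u u' w w' : List Bool} (hu : IsDyck u) (hu' : IsDyck u')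
    (hw : ∀ p, p <+: w → 0 ≤ drift p) (hw' : ∀ p, p <+: w' → 0 ≤ drift p)
    (h : u ++ true :: w = u' ++ true :: w') : u = u' ∧ w = w' := by
  have hu₀ := (isDyck_iff.1 hu).1
  have hu'₀ := (isDyck_iff.1 hu').1
  rcases List.append_cons_eq_append_cons h with h | ⟨t, rfl, ht⟩ | ⟨t, rfl, ht⟩
  · exact h
  · have := hw t ht
    simp only [drift_append, drift_cons_true, hu₀] at hu'₀
    omega
  · have := hw' t ht
    simp only [drift_append, drift_cons_true, hu'₀] at hu₀
    omega

lemma exists_isDyck_append_true {w : List Bool} (hw : ∀ p, p <+: w → 0 ≤ drift p)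
    (hpos : 0 < drift w) :
    ∃ u t, w = u ++ true :: t ∧ IsDyck u ∧ ∀ p, p <+: t → 0 ≤ drift p := by
  induction w using List.reverseRecOn with
  | nil => simp at hpos
  | append_singleton w b ih =>
    have hw' := (List.forall_prefix_append.1 hw).1
    by_cases hw₀ : drift w = 0
    · cases b
      · simp [hw₀] at hpos
      · exact ⟨w, [], rfl, isDyck_iff.2 ⟨hw₀, hw'⟩, by simp⟩
    · obtain ⟨u, t, rfl, hu, ht⟩ :=
        ih hw' (lt_of_le_of_ne (hw' w List.prefix_rfl) (Ne.symm hw₀))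
      refine ⟨u, t ++ [b], by simp, hu,
        List.forall_prefix_append.2 ⟨ht, List.forall_prefix_cons.2 ⟨?_, ?_⟩⟩⟩
      · simpa using ht t List.prefix_rfl
      · simp only [List.prefix_nil, forall_eq, List.append_assoc, List.cons_append, drift_append,
          drift_cons_true, (isDyck_iff.1 hu).1] at hpos ⊢
        omega

def passageWord (us : List (List Bool)) : List Bool :=
  (us.map (· ++ [true])).flatten

@[simp] lemma passageWord_nil : passageWord [] = [] := rfl

@[simp] lemma passageWord_cons (u : List Bool) (us : List (List Bool)) :
    passageWord (u :: us) = u ++ true :: passageWord us := by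
  simp [passageWord]

def AdmissibleBulges (m : ℕ) (us : List (List Bool)) : Prop :=
  us.length = m ∧ ∀ j < us.length, IsDyck (us.getD j []) ∧ heightList (us.getD j []) ≤ m - j

lemma admissibleBulges_zero_iff {us : List (List Bool)} : AdmissibleBulges 0 us ↔ us = [] := by
  refine ⟨fun h => List.eq_nil_of_length_eq_zero h.1, ?_⟩
  rintro rfl
  simp [AdmissibleBulges]

lemma admissibleBulges_succ_iff {m : ℕ} {us : List (List Bool)} :
    AdmissibleBulges (m + 1) us ↔
      ∃ u us', us = u :: us' ∧ IsDyck u ∧ heightList u ≤ m + 1 ∧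
        AdmissibleBulges m us' := by
  constructor
  · rintro ⟨hlen, h⟩
    obtain ⟨u, us', rfl⟩ := List.exists_cons_of_length_eq_add_one hlen
    have h₀ : IsDyck u ∧ heightList u ≤ m + 1 := by simpa using h 0
    refine ⟨u, us', rfl, h₀.1, h₀.2, by simpa using hlen, fun j hj => ?_⟩
    simpa using h (j + 1) (by simpa using hj)
  · rintro ⟨u, us', rfl, hu, hhu, hlen, h⟩
    refine ⟨by simp [hlen], fun j hj => ?_⟩
    cases j with
    | zero => exact ⟨hu, hhu⟩
    | succ j => simpa using h j (by simpa using hj)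

theorem AdmissibleBulges.isBoundedPath_passageWord {m : ℕ} {us : List (List Bool)}
    (hus : AdmissibleBulges m us) : IsBoundedPath m (passageWord us) := by
  induction m generalizing us with
  | zero => simp [admissibleBulges_zero_iff.1 hus, IsBoundedPath]
  | succ m ih =>
    obtain ⟨u, us, rfl, hu, hhu, hus⟩ := admissibleBulges_succ_iff.1 hus
    obtain ⟨hu₀, hu⟩ := isDyck_iff.1 hu
    obtain ⟨hdrift, hbound⟩ := ih hus
    rw [passageWord_cons]
    refine ⟨by simp [hu₀, hdrift],
      List.forall_prefix_append.2 ⟨fun p hp => ⟨hu p hp, ?_⟩, ?_⟩⟩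
    · exact heightList_le_iff.1 hhu p hp
    · refine List.forall_prefix_cons.2
        ⟨by simp only [List.append_nil, hu₀]; omega, fun q hq => ?_⟩
      have := hbound q hq
      simp only [drift_append, drift_cons_true, hu₀]
      omega

theorem AdmissibleBulges.eq_of_passageWord_eq {m : ℕ} {us us' : List (List Bool)}
    (hus : AdmissibleBulges m us) (hus' : AdmissibleBulges m us')
    (h : passageWord us = passageWord us') : us = us' := by
  induction m generalizing us us' with
  | zero => rw [admissibleBulges_zero_iff.1 hus, admissibleBulges_zero_iff.1 hus']
  | succ m ih =>
    obtain ⟨u, us, rfl, hu, -, hus₁⟩ := admissibleBulges_succ_iff.1 hus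
    obtain ⟨u', us', rfl, hu', -, hus₁'⟩ := admissibleBulges_succ_iff.1 hus'
    rw [passageWord_cons, passageWord_cons] at h
    obtain ⟨rfl, htail⟩ := hu.append_true_cancel hu'
      (fun p hp => (hus₁.isBoundedPath_passageWord.2 p hp).1)
      (fun p hp => (hus₁'.isBoundedPath_passageWord.2 p hp).1) h
    rw [ih hus₁ hus₁' htail]

theorem IsBoundedPath.exists_passageWord {m : ℕ} {w : List Bool} (hw : IsBoundedPath m w) :
    ∃ us, AdmissibleBulges m us ∧ w = passageWord us := by
  induction m generalizing w with
  | zero => exact ⟨[], admissibleBulges_zero_iff.2 rfl, isBoundedPath_zero_iff.1 hw⟩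
  | succ m ih =>
    obtain ⟨hdrift, hw⟩ := hw
    obtain ⟨u, t, rfl, hu, ht⟩ :=
      exists_isDyck_append_true (fun p hp => (hw p hp).1) (by rw [hdrift]; positivity)
    obtain ⟨hwu, hwt⟩ := List.forall_prefix_append.1 hw
    have hu₀ := (isDyck_iff.1 hu).1
    have ht : IsBoundedPath m t := by
      refine ⟨by simp only [drift_append, drift_cons_true, hu₀] at hdrift; omega,
        fun p hp => ⟨ht p hp, ?_⟩⟩
      have := (hwt (true :: p) (List.cons_prefix_cons.2 ⟨rfl, hp⟩)).2
      simp only [drift_append, drift_cons_true, hu₀] at this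
      omega
    obtain ⟨us, hus, rfl⟩ := ih ht
    exact ⟨u :: us, admissibleBulges_succ_iff.2 ⟨u, us, rfl, hu,
      heightList_le_iff.2 fun p hp => (hwu p hp).2, hus⟩, (passageWord_cons u us).symm⟩

lemma exists_prefix_drift_eq_heightList (w : List Bool) :
    ∃ p, p <+: w ∧ drift p = heightList w := by
  by_contra! hne
  have h₀ := hne [] List.nil_prefix
  have : heightList w ≤ heightList w - 1 := heightList_le_iff.2 fun p hp => by
    have := drift_le_heightList hp
    have := hne p hp
    omega
  rw [drift_nil] at h₀
  omega

lemma exists_leftmost_peak {w : List Bool} {H : ℕ} (hH : heightList w = H + 1) :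
    ∃ M N, w = M ++ true :: N ∧ drift M = H ∧ ∀ p, p <+: M → drift p ≤ H := by
  classical
  have hmax : ∀ p, p <+: w → drift p ≤ H + 1 := by exact_mod_cast heightList_le_iff.1 hH.le
  have hex : ∃ n, drift (w.take n) = H + 1 := by
    obtain ⟨p, hp, hpH⟩ := exists_prefix_drift_eq_heightList w
    exact ⟨p.length, by rw [← List.prefix_iff_eq_take.1 hp, hpH, hH]; push_cast; rfl⟩
  have hpeak := Nat.find_spec hex
  rcases List.eq_nil_or_concat (w.take (Nat.find hex)) with hL | ⟨M, b, hL⟩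
  · rw [hL, drift_nil] at hpeak
    omega
  rw [List.concat_eq_append] at hL
  have hM : ∀ p, p <+: M → drift p ≤ H := fun p hp => by
    have hpw : p <+: w := hp.trans ((List.prefix_append M [b]).trans (hL ▸ List.take_prefix _ w))
    have hlt : p.length < Nat.find hex := calc
      p.length < (M ++ [b]).length := by simpa using Nat.lt_succ_of_le hp.length_le
      _ ≤ Nat.find hex := hL ▸ List.length_take_le _ w
    have := Nat.find_min hex hlt
    rw [← List.prefix_iff_eq_take.1 hpw] at this
    have := hmax p hpw
    omega
  rw [hL] at hpeak
  obtain rfl : b = true := by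
    cases b
    · have := hM M List.prefix_rfl
      simp only [drift_append, drift_cons_false, drift_nil] at hpeak
      omega
    · rfl
  refine ⟨M, w.drop (Nat.find hex), ?_, by simpa using hpeak, hM⟩
  conv_lhs => rw [← List.take_append_drop (Nat.find hex) w, hL]
  simp

lemma IsDyck.eq_nil_of_heightList_eq_zero {z : List Bool} (hz : IsDyck z)
    (h : heightList z = 0) : z = [] :=
  isBoundedPath_zero_iff.1 ⟨(isDyck_iff.1 hz).1, fun p hp =>
    ⟨(isDyck_iff.1 hz).2 p hp, by exact_mod_cast heightList_le_iff.1 h.le p hp⟩⟩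

theorem IsDyck.exists_split_at_peak {z : List Bool} {H : ℕ} (hz : IsDyck z)
    (hH : heightList z = H + 1) :
    ∃ M N, z = M ++ true :: N ∧ IsBoundedPath H M ∧ IsBoundedPath (H + 1) (N.map not) := by
  have hmax : ∀ p, p <+: z → drift p ≤ H + 1 := by exact_mod_cast heightList_le_iff.1 hH.le
  obtain ⟨M, N, rfl, hdrM, hM⟩ := exists_leftmost_peak hH
  obtain ⟨hz₀, hz⟩ := isDyck_iff.1 hz
  refine ⟨M, N, rfl,
    ⟨hdrM, fun p hp => ⟨hz p (hp.trans (List.prefix_append _ _)), hM p hp⟩⟩,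
    by simp only [drift_append, drift_cons_true, drift_map_not, hdrM] at hz₀ ⊢; omega,
    fun q hq => ?_⟩
  obtain ⟨p, hp, rfl⟩ := List.prefix_map_iff.1 hq
  have hpz : M ++ true :: p <+: M ++ true :: N := by simpa using hp
  have h₀ := hz _ hpz
  have h₁ := hmax _ hpz
  simp only [drift_append, drift_cons_true, drift_map_not, hdrM] at h₀ h₁ ⊢
  omega

theorem IsPrimeDyck.exists_eq_cons_append {y : List Bool} (hy : IsPrimeDyck y) :
    ∃ z, y = true :: z ++ [false] ∧ IsDyck z := by
  obtain ⟨hyd, hne, hprime⟩ := hy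
  obtain ⟨hy₀, hy⟩ := isDyck_iff.1 hyd
  have hpos : ∀ p, p <+: y → 0 < p.length → p.length < y.length → 0 < drift p := by
    intro p hp h₀ hlt
    have := hprime p.length h₀ hlt
    rw [← List.prefix_iff_eq_take.1 hp] at this
    simp only [drift]
    omega
  obtain ⟨a, y, rfl⟩ := List.exists_cons_of_ne_nil hne
  rcases List.eq_nil_or_concat y with rfl | ⟨z, b, rfl⟩
  · cases a <;> simp at hy₀
  rw [List.concat_eq_append] at *
  have ha := hy [a] (by simp)
  have hz := hpos (a :: z) (List.cons_prefix_cons.2 ⟨rfl, List.prefix_append _ _⟩)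
    (by simp) (by simp)
  obtain ⟨rfl, rfl⟩ : a = true ∧ b = false := by
    cases a <;> cases b <;>
      simp only [drift_append, drift_cons_true, drift_cons_false, drift_nil, and_self]
        at ha hz hy₀ ⊢ <;>
      omega
  refine ⟨z, rfl, isDyck_iff.2 ⟨by simpa using hy₀, fun p hp => ?_⟩⟩
  have := hpos (true :: p) (by simpa using hp.trans (List.prefix_append z [false])) (by simp)
    (by simpa using Nat.lt_succ_of_le hp.length_le)
  rw [drift_cons_true] at this
  omega

lemma heightList_cons_true_append_false (z : List Bool) :
    heightList (true :: z ++ [false]) = heightList z + 1 := by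
  have hz := drift_le_heightList (List.prefix_refl z)
  have hcons : ∀ p, p <+: z → drift p + 1 ≤ heightList (true :: z ++ [false]) :=
    fun p hp => by
      simpa using drift_le_heightList (w := true :: z ++ [false]) (p := true :: p)
        (by simpa using hp.trans (List.prefix_append z [false]))
  have h₁ := hcons [] List.nil_prefix
  rw [drift_nil, zero_add] at h₁
  apply le_antisymm
  · refine heightList_le_iff.2 fun p hp => ?_
    rcases List.prefix_concat_iff.1 hp with rfl | hp
    · simp only [List.cons_append, drift_cons_true, drift_append, drift_cons_false, drift_nil]
      omega
    rcases List.prefix_cons_iff.1 hp with rfl | ⟨q, rfl, hq⟩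
    · rw [drift_nil]
      positivity
    · simpa using heightList_le_iff.1 le_rfl q hq
  · have : heightList z ≤ heightList (true :: z ++ [false]) - 1 :=
      heightList_le_iff.2 fun p hp => by have := hcons p hp; omega
    omega

lemma hillWord_eq_cons_passageWord (us vs : List (List Bool)) :
    hillWord us vs =
      true :: (passageWord us ++ true :: (passageWord (vs.map (List.map not))).map not) ++
        [false] := by
  induction us with
  | nil => simp [hillWord, passageWord, List.map_flatten, Function.comp_def]
  | cons u us ih => simp_all [hillWord]

lemma admissibleBulges_map_not_iff {m : ℕ} {vs : List (List Bool)} :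
    AdmissibleBulges m (vs.map (List.map not)) ↔ vs.length = m ∧
      ∀ j < vs.length, IsDyck ((vs.getD j []).map not) ∧
        heightList ((vs.getD j []).map not) ≤ m - j := by
  simp only [AdmissibleBulges, List.length_map, ← List.getD_map, List.map_nil]

theorem IsDyck.existsUnique_hillWord {z : List Bool} {H : ℕ} (hz : IsDyck z)
    (hH : heightList z = H + 1) :
    ∃! p : List (List Bool) × List (List Bool), AdmissibleBulges H p.1 ∧
      AdmissibleBulges (H + 1) (p.2.map (List.map not)) ∧
      true :: z ++ [false] = hillWord p.1 p.2 := by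
  simp only [hillWord_eq_cons_passageWord, List.cons_append, List.cons.injEq, true_and,
    List.append_cancel_right_eq]
  obtain ⟨M, N, rfl, hM, hN⟩ := hz.exists_split_at_peak hH
  obtain ⟨us, hus, rfl⟩ := hM.exists_passageWord
  obtain ⟨vs, hvs, hvsN⟩ := hN.exists_passageWord
  refine ⟨(us, vs.map (List.map not)),
    ⟨hus, by simpa [Function.comp_def] using hvs, ?_⟩, ?_⟩
  · simp [Function.comp_def, ← hvsN]
  rintro ⟨us', vs'⟩ ⟨hus', hvs', h⟩
  dsimp only at hus' hvs' h
  obtain ⟨hM', hN'⟩ := hus.isBoundedPath_passageWord.append_true_cancel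
    hus'.isBoundedPath_passageWord h
  have hvs'' : vs'.map (List.map not) = vs := by
    refine hvs'.eq_of_passageWord_eq hvs ?_
    simpa [hN', Function.comp_def] using hvsN
  rw [hus'.eq_of_passageWord_eq hus hM'.symm, ← hvs'']
  simp [Function.comp_def]

/-- Every hill `y ∈ D'` of height `h ≥ 2` decomposes **uniquely** as
`y = 1 u_1 1 u_2 ⋯ 1 u_{h-2} 1 1 v_0 0 v_1 0 ⋯ 0 v_{h-2} 0 0` with `u_i ∈ D` of height
at most `h-1-i` and valleys `v_i` (complemented Dyck words) of depth at most `h-1-i`;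
for `h = 1` we simply have `y = 10` (no bulges or dents). -/
theorem hill_decomposition (y : List Bool) (hy : IsPrimeDyck y) :
    (heightList y = 1 → y = [true, false]) ∧
    (2 ≤ heightList y →
      ∃! p : List (List Bool) × List (List Bool),
        p.1.length = heightList y - 2 ∧
        p.2.length = heightList y - 1 ∧
        (∀ j < p.1.length, IsDyck (p.1.getD j []) ∧
          heightList (p.1.getD j []) ≤ heightList y - 2 - j) ∧
        (∀ j < p.2.length, IsDyck ((p.2.getD j []).map not) ∧
          heightList ((p.2.getD j []).map not) ≤ heightList y - 1 - j) ∧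
        y = hillWord p.1 p.2) := by
  obtain ⟨z, rfl, hz⟩ := hy.exists_eq_cons_append
  rw [heightList_cons_true_append_false]
  refine ⟨fun h₁ => ?_, fun h₂ => ?_⟩
  · rw [hz.eq_nil_of_heightList_eq_zero (by omega)]
    rfl
  · obtain ⟨H, hH⟩ : ∃ H, heightList z = H + 1 := ⟨heightList z - 1, by omega⟩
    rw [hH, show H + 1 + 1 - 2 = H by omega, show H + 1 + 1 - 1 = H + 1 by omega]
    refine (existsUnique_congr fun p => ?_).1 (hz.existsUnique_hillWord hH)
    rw [admissibleBulges_map_not_iff, AdmissibleBulges]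
    tauto
end

section
/- Let v_1 ≤ v_2 ≤ ⋯ ≤ v_ν be positive integers with 2(v_1 + ⋯ + v_ν) < n, and define V_i = Σ_{j=1}^{ν} 2 v_{min(i,j)} for i = 2,...,ν. Let M be the ν × ν matrix whose first column is (v_1,...,v_ν)^T, whose (i,j) entry for j ≥ 2, i < j is -2v_i, for j ≥ 2, i > j is -2v_j, and whose diagonal entries for i ≥ 2 are V_i - 2v_i - n. Then det M = (-1)^{ν-1} v_1 ∏_{i=2}^{ν} (n - V_i), and this is nonzero. -/
/-- Determinant of the coefficient matrix of the glider equations of motion: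
for positive integers `v_1 ≤ … ≤ v_ν` with `2(v_1 + ⋯ + v_ν) < n` and
`V_i = Σ_j 2 v_{min(i,j)}`, the matrix `M` with first column `(v_1,…,v_ν)ᵀ`,
entries `-2v_i` above / `-2v_j` below the diagonal (for columns `j ≥ 2`), and
diagonal entries `V_i - 2v_i - n` (for `i ≥ 2`), has determinant
`(-1)^{ν-1} v_1 ∏_{i=2}^{ν} (n - V_i) ≠ 0`. -/
theorem glider_matrix_det (ν n : ℕ) (hν : 1 ≤ ν) (v : Fin ν → ℕ)
    (hpos : ∀ i, 0 < v i) (hmono : Monotone v)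
    (hsum : 2 * (∑ i, v i) < n) :
    ∀ (i0 : Fin ν), i0 = ⟨0, hν⟩ →
    ∀ (Vf : Fin ν → ℤ), Vf = (fun i => ∑ j, 2 * (v (min i j) : ℤ)) →
    ∀ (M : Matrix (Fin ν) (Fin ν) ℤ),
      M = (fun i j =>
        if j = i0 then (v i : ℤ)
        else if i = j then Vf i - 2 * (v i : ℤ) - (n : ℤ)
        else if i < j then -2 * (v i : ℤ) else -2 * (v j : ℤ)) →
    M.det = (-1) ^ (ν - 1) * (v i0 : ℤ) *
        ∏ i ∈ Finset.univ.erase i0, ((n : ℤ) - Vf i) ∧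
      M.det ≠ 0 := by
  intro i0 hi0 Vf hVf M hM
  have hle : ∀ j : Fin ν, i0 ≤ j := by
    intro j; rw [hi0, Fin.le_def]; exact Nat.zero_le _
  -- Vf i < n
  have hVlt : ∀ i, Vf i < (n : ℤ) := by
    intro i
    rw [hVf]
    have h1 : (∑ j, 2 * (v (min i j) : ℤ)) ≤ ∑ j, 2 * (v j : ℤ) := by
      apply Finset.sum_le_sum
      intro j _
      have := hmono (min_le_right i j)
      omega
    have h2 : (∑ j, 2 * (v j : ℤ)) < n := by
      have : (2 * (∑ i, v i) : ℤ) < n := by exact_mod_cast hsum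
      push_cast at this
      rw [Finset.mul_sum] at this
      exact this
    exact lt_of_le_of_lt h1 h2
  -- the elementary column-operation matrix
  set T : Matrix (Fin ν) (Fin ν) ℤ :=
    fun k j => if k = j then 1 else if k = i0 then 2 else 0 with hT
  set N : Matrix (Fin ν) (Fin ν) ℤ :=
    fun i j =>
      if j = i0 then (v i : ℤ)
      else if i < j then 0
      else if i = j then Vf i - (n : ℤ)
      else 2 * (v i : ℤ) - 2 * (v j : ℤ) with hN
  have hdetT : T.det = 1 := by
    rw [Matrix.det_of_upperTriangular]
    · simp [hT]
    · intro k j hjk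
      simp only [hT]
      have hkj : k ≠ j := by exact fun h => absurd h (by simp at hjk ⊢; omega)
      have : k ≠ i0 := fun h => absurd (h ▸ hjk : j < i0) (not_lt.mpr (hle j))
      simp [hkj, this]
  have hmul : M * T = N := by
    ext i j
    rw [Matrix.mul_apply]
    by_cases hj : j = i0
    · subst hj
      have ht : ∀ k, T k j = if k = j then 1 else 0 := by
        intro k; by_cases h : k = j <;> simp [hT, h]
      simp only [ht, mul_ite, mul_one, mul_zero, Finset.sum_ite_eq',
        Finset.mem_univ, if_true]
      simp [hM, hN]
    · have ht : ∀ k, T k j = (if k = j then 1 else 0) + (if k = i0 then 2 else 0) := by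
        intro k
        by_cases h1 : k = j
        · subst h1; simp [hT, hj]
        · by_cases h2 : k = i0 <;> simp [hT, h1, h2, Ne.symm hj]
      simp only [ht, mul_add, Finset.sum_add_distrib, mul_ite, mul_one, mul_zero,
        mul_comm, Finset.sum_ite_eq', Finset.mem_univ, if_true]
      have hMi0 : M i i0 = (v i : ℤ) := by simp [hM]
      rw [hMi0]
      rcases lt_trichotomy i j with hij | hij | hij
      · have hii0 : i ≠ j := ne_of_lt hij
        simp [hM, hN, hj, hij, hii0, not_lt_of_gt hij]
        ring
      · subst hij
        simp [hM, hN, hj]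
        ring
      · have hii0 : i ≠ j := (ne_of_lt hij).symm
        simp [hM, hN, hj, hii0, not_lt_of_gt hij, hij]
        ring
  have hdetM : M.det = N.det := by
    have := Matrix.det_mul M T
    rw [hmul, hdetT, mul_one] at this
    exact this.symm
  have hdetN : N.det = ∏ i, N i i := by
    apply Matrix.det_of_lowerTriangular
    intro i j hij
    have hij : i < j := hij
    have hj : j ≠ i0 := fun h => absurd (h ▸ hij : i < i0) (not_lt.mpr (hle i))
    simp [hN, hj, hij]
  have hNi0 : N i0 i0 = (v i0 : ℤ) := by simp [hN]
  have hNi : ∀ i ∈ Finset.univ.erase i0, N i i = Vf i - (n : ℤ) := by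
    intro i hi
    have : i ≠ i0 := (Finset.mem_erase.mp hi).1
    simp [hN, this]
  have hcard : (Finset.univ.erase i0).card = ν - 1 := by
    rw [Finset.card_erase_of_mem (Finset.mem_univ _)]
    simp
  have hprod : (∏ i, N i i) =
      (-1) ^ (ν - 1) * (v i0 : ℤ) * ∏ i ∈ Finset.univ.erase i0, ((n : ℤ) - Vf i) := by
    rw [← Finset.mul_prod_erase Finset.univ _ (Finset.mem_univ i0), hNi0,
      Finset.prod_congr rfl hNi]
    have : (∏ i ∈ Finset.univ.erase i0, (Vf i - (n : ℤ))) =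
        (∏ i ∈ Finset.univ.erase i0, ((-1 : ℤ) * ((n : ℤ) - Vf i))) := by
      apply Finset.prod_congr rfl; intro i _; ring
    rw [this, Finset.prod_mul_distrib, Finset.prod_const, hcard]
    ring
  have hdet : M.det = (-1) ^ (ν - 1) * (v i0 : ℤ) *
      ∏ i ∈ Finset.univ.erase i0, ((n : ℤ) - Vf i) := by
    rw [hdetM, hdetN, hprod]
  refine ⟨hdet, ?_⟩
  rw [hdet]
  apply mul_ne_zero
  apply mul_ne_zero
  · exact pow_ne_zero _ (by norm_num)
  · exact_mod_cast (hpos i0).ne'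
  · apply Finset.prod_ne_zero_iff.mpr
    intro i _
    have := hVlt i
    omega
end

section
/- Let k ≥ 1, n ≥ 2k+1, g = gcd(n,k), and s_i the cyclic right-shift by i of 1^k 0^k 0^{n-2k}, viewed as vertices of K(n,k). Let D be the set of g cycles C(s_i) = (s_{i+kj})_{j=0,...,n/g-1}, i = 0,...,g-1, in the Kneser graph. Then for any r ∈ {0,...,n-1}, the symmetric difference of the union of the edge sets of the cycles in D with the 4-cycles (s_{r+j}, s_{r+j+k}, s_{r+j+2k+1}, s_{r+j+k+1}) for j = 0,...,g-2 is a single cycle on the vertex set {s_0,...,s_{n-1}}. -/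
/-- Edges of the cycles `C(s_i)` of the factor, transported to the indices:
`{a, a+k}` (an edge of the cycle through `s_a`). -/
def cycleEdge (n k : ℕ) (a b : ZMod n) : Prop :=
  b = a + (k : ZMod n) ∨ a = b + (k : ZMod n)

/-- `{a,b} = {u,v}` as unordered pairs. -/
def pairEq {α : Type*} (a b u v : α) : Prop := (a = u ∧ b = v) ∨ (a = v ∧ b = u)

lemma pairEq_comm {α : Type*} {a b u v : α} : pairEq a b u v ↔ pairEq b a u v :=
  ⟨fun h => h.elim (fun h => Or.inr ⟨h.2, h.1⟩) (fun h => Or.inl ⟨h.2, h.1⟩),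
   fun h => h.elim (fun h => Or.inr ⟨h.2, h.1⟩) (fun h => Or.inl ⟨h.2, h.1⟩)⟩

/-- Edges of the gluing 4-cycles `(s_{r+j}, s_{r+j+k}, s_{r+j+2k+1}, s_{r+j+k+1})`
for `j = 0,…,gcd(n,k)-2`, transported to the indices. -/
def gluingEdge (n k r : ℕ) (a b : ZMod n) : Prop :=
  ∃ j : ℕ, j + 1 < n.gcd k ∧
    (pairEq a b (((r + j : ℕ) : ZMod n)) (((r + j : ℕ) : ZMod n) + (k : ZMod n)) ∨
     pairEq a b (((r + j : ℕ) : ZMod n) + (k : ZMod n))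
       (((r + j : ℕ) : ZMod n) + ((2 * k + 1 : ℕ) : ZMod n)) ∨
     pairEq a b (((r + j : ℕ) : ZMod n) + ((2 * k + 1 : ℕ) : ZMod n))
       (((r + j : ℕ) : ZMod n) + ((k + 1 : ℕ) : ZMod n)) ∨
     pairEq a b (((r + j : ℕ) : ZMod n) + ((k + 1 : ℕ) : ZMod n)) (((r + j : ℕ) : ZMod n)))

lemma cycleEdge_comm {n k : ℕ} {a b : ZMod n} : cycleEdge n k a b ↔ cycleEdge n k b a :=
  Or.comm

lemma gluingEdge_comm {n k r : ℕ} {a b : ZMod n} :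
    gluingEdge n k r a b ↔ gluingEdge n k r b a := by
  constructor <;>
    (rintro ⟨j, hj, h | h | h | h⟩ <;>
      exact ⟨j, hj, by
        first
        | exact Or.inl (pairEq_comm.mp h)
        | exact Or.inr (Or.inl (pairEq_comm.mp h))
        | exact Or.inr (Or.inr (Or.inl (pairEq_comm.mp h)))
        | exact Or.inr (Or.inr (Or.inr (pairEq_comm.mp h)))⟩)

/-- The graph on the indices `i` of the vertices `s_i` whose edge set is the symmetric
difference of the union of the edge sets of the `gcd(n,k)` cycles of `D` with the edge
sets of the `gcd(n,k) - 1` gluing 4-cycles. -/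
def symmDiffGraph (n k r : ℕ) : SimpleGraph (ZMod n) where
  Adj a b := a ≠ b ∧ Xor' (cycleEdge n k a b) (gluingEdge n k r a b)
  symm := by
    constructor
    rintro a b ⟨hne, hx⟩
    refine ⟨hne.symm, ?_⟩
    rw [cycleEdge_comm (n := n), gluingEdge_comm (n := n)] at hx
    exact hx
  loopless := by constructor; rintro a ⟨hne, -⟩; exact hne rfl

/-!
Write the index of `s_i` as `i = r + a + b * k` with `a < g` and `b < n / g`. This identifies the
vertices with a `g × (n / g)` grid whose row `a` is the cycle `C(s_{r+a})`, run through in the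
order of `b`. The `j`-th gluing 4-cycle has corners `(j,0), (j,1), (j+1,2), (j+1,1)`, so the
symmetric difference deletes the row edges `(a,0)(a,1)` for `a < g - 1` and `(a,1)(a,2)` for
`a > 0`, and adds the diagonals `(j,1)(j+1,2)` and `(j,0)(j+1,1)`. Every vertex still has exactly
two neighbours, and the diagonals join each row to the next, so the graph is a connected
2-regular graph on all `n` vertices, that is, a single Hamiltonian cycle.
-/

namespace SimpleGraph

variable {V : Type*} {G : SimpleGraph V}

theorem Connected.exists_isHamiltonianCycle_of_isCycles [Finite V] [Nontrivial V]
    [DecidableEq V] (hG : G.Connected) (hcyc : G.IsCycles) (v : V) :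
    ∃ p : G.Walk v v, p.IsHamiltonianCycle := by
  obtain ⟨p, hp, hverts⟩ :=
    hcyc.exists_cycle_toSubgraph_verts_eq_connectedComponentSupp (c := G.connectedComponentMk v)
      rfl (hG.preconnected.exists_adj_of_nontrivial v)
  refine ⟨p, Walk.isHamiltonianCycle_iff_isCycle_and_support_count_tail_eq_one.mpr
    ⟨hp, fun w => List.count_eq_one_of_mem hp.support_nodup ?_⟩⟩
  have hw : w ∈ p.support := by
    rw [← Walk.mem_verts_toSubgraph, hverts, ConnectedComponent.mem_supp_iff,
      ConnectedComponent.eq]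
    exact hG.preconnected w v
  rcases p.mem_support_iff.mp hw with rfl | hw
  · exact Walk.end_mem_tail_support hp.not_nil
  · exact hw

end SimpleGraph

lemma Set.InjOn.pairEq_iff {α β : Type*} {f : α → β} {s : Set α} (hf : s.InjOn f)
    {a b u v : α} (ha : a ∈ s) (hb : b ∈ s) (hu : u ∈ s) (hv : v ∈ s) :
    pairEq (f a) (f b) (f u) (f v) ↔ pairEq a b u v := by
  simp only [pairEq, hf.eq_iff ha hu, hf.eq_iff hb hv, hf.eq_iff ha hv, hf.eq_iff hb hu]

namespace SymmDiffCycle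

def grid (g m : ℕ) : Finset (ℕ × ℕ) := Finset.range g ×ˢ Finset.range m

@[simp] lemma mem_grid {g m : ℕ} {p : ℕ × ℕ} : p ∈ grid g m ↔ p.1 < g ∧ p.2 < m := by
  simp [grid]

def rowStep (m b d : ℕ) : Prop := d = b + 1 ∨ (b + 1 = m ∧ d = 0)

def gridCycleEdge (m : ℕ) (p q : ℕ × ℕ) : Prop :=
  p.1 = q.1 ∧ (rowStep m p.2 q.2 ∨ rowStep m q.2 p.2)

def gridGluingEdge (g : ℕ) (p q : ℕ × ℕ) : Prop :=
  ∃ j, j + 1 < g ∧ (pairEq p q (j, 0) (j, 1) ∨ pairEq p q (j, 1) (j + 1, 2) ∨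
    pairEq p q (j + 1, 2) (j + 1, 1) ∨ pairEq p q (j + 1, 1) (j, 0))

def gridAdj (g m : ℕ) (p q : ℕ × ℕ) : Prop :=
  p ≠ q ∧ Xor (gridCycleEdge m p q) (gridGluingEdge g p q)

def IsRemovedRowEdge (g a b d : ℕ) : Prop :=
  (a + 1 < g ∧ (b = 0 ∧ d = 1 ∨ b = 1 ∧ d = 0)) ∨
    (1 ≤ a ∧ a < g ∧ (b = 1 ∧ d = 2 ∨ b = 2 ∧ d = 1))

def IsDiagonal (g : ℕ) (p q : ℕ × ℕ) : Prop :=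
  q.1 = p.1 + 1 ∧ q.1 < g ∧ (p.2 = 1 ∧ q.2 = 2 ∨ p.2 = 0 ∧ q.2 = 1)

lemma gridGluingEdge_iff {g a b c d : ℕ} :
    gridGluingEdge g (a, b) (c, d) ↔
      (a = c ∧ IsRemovedRowEdge g a b d) ∨ IsDiagonal g (a, b) (c, d) ∨
        IsDiagonal g (c, d) (a, b) := by
  simp only [gridGluingEdge, IsRemovedRowEdge, IsDiagonal, pairEq, Prod.mk.injEq]
  constructor
  · rintro ⟨j, hj, (⟨⟨rfl, rfl⟩, rfl, rfl⟩ | ⟨⟨rfl, rfl⟩, rfl, rfl⟩) |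
      (⟨⟨rfl, rfl⟩, rfl, rfl⟩ | ⟨⟨rfl, rfl⟩, rfl, rfl⟩) |
      (⟨⟨rfl, rfl⟩, rfl, rfl⟩ | ⟨⟨rfl, rfl⟩, rfl, rfl⟩) |
      (⟨⟨rfl, rfl⟩, rfl, rfl⟩ | ⟨⟨rfl, rfl⟩, rfl, rfl⟩)⟩ <;> omega
  · rintro (⟨rfl, ⟨hj, h⟩ | ⟨ha, hg, h⟩⟩ | ⟨rfl, hj, h⟩ | ⟨rfl, hj, h⟩)
    · exact ⟨a, hj, by rcases h with ⟨rfl, rfl⟩ | ⟨rfl, rfl⟩ <;> simp⟩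
    · obtain ⟨j, rfl⟩ : ∃ j, a = j + 1 := ⟨a - 1, by omega⟩
      exact ⟨j, hg, by rcases h with ⟨rfl, rfl⟩ | ⟨rfl, rfl⟩ <;> simp⟩
    · exact ⟨a, hj, by rcases h with ⟨rfl, rfl⟩ | ⟨rfl, rfl⟩ <;> simp⟩
    · exact ⟨c, hj, by rcases h with ⟨rfl, rfl⟩ | ⟨rfl, rfl⟩ <;> simp⟩

lemma gridAdj_iff {g m a b c d : ℕ} (hm : 3 ≤ m) :
    gridAdj g m (a, b) (c, d) ↔
      (gridCycleEdge m (a, b) (c, d) ∧ ¬ (a = c ∧ IsRemovedRowEdge g a b d)) ∨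
        IsDiagonal g (a, b) (c, d) ∨ IsDiagonal g (c, d) (a, b) := by
  have hR : a = c ∧ IsRemovedRowEdge g a b d → gridCycleEdge m (a, b) (c, d) := by
    simp only [IsRemovedRowEdge, gridCycleEdge, rowStep]
    omega
  have hD₁ : IsDiagonal g (a, b) (c, d) → ¬ gridCycleEdge m (a, b) (c, d) := by
    simp only [IsDiagonal, gridCycleEdge]
    omega
  have hD₂ : IsDiagonal g (c, d) (a, b) → ¬ gridCycleEdge m (a, b) (c, d) := by
    simp only [IsDiagonal, gridCycleEdge]
    omega
  have hne : gridCycleEdge m (a, b) (c, d) ∨ IsDiagonal g (a, b) (c, d) ∨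
      IsDiagonal g (c, d) (a, b) → (a, b) ≠ (c, d) := by
    simp only [gridCycleEdge, rowStep, IsDiagonal, ne_eq, Prod.mk.injEq]
    omega
  simp only [gridAdj, Xor, gridGluingEdge_iff]
  tauto

lemma exists_gridAdj_iff_eq_or_eq {g m : ℕ} (hm : 3 ≤ m) {p : ℕ × ℕ} (hp : p ∈ grid g m) :
    ∃ x ∈ grid g m, ∃ y ∈ grid g m, x ≠ y ∧
      ∀ q ∈ grid g m, gridAdj g m p q ↔ q = x ∨ q = y := by
  obtain ⟨a, b⟩ := p
  rw [mem_grid] at hp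
  suffices ∃ x₁ x₂ y₁ y₂, (x₁ < g ∧ x₂ < m ∧ y₁ < g ∧ y₂ < m ∧ (x₁ ≠ y₁ ∨ x₂ ≠ y₂)) ∧
      ∀ c d, c < g → d < m →
        (gridAdj g m (a, b) (c, d) ↔ (c = x₁ ∧ d = x₂) ∨ (c = y₁ ∧ d = y₂)) by
    obtain ⟨x₁, x₂, y₁, y₂, ⟨hx₁, hx₂, hy₁, hy₂, hxy⟩, h⟩ := this
    refine ⟨(x₁, x₂), mem_grid.mpr ⟨hx₁, hx₂⟩, (y₁, y₂), mem_grid.mpr ⟨hy₁, hy₂⟩,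
      by simpa [Prod.ext_iff, or_iff_not_imp_left] using hxy, fun ⟨c, d⟩ hq => ?_⟩
    rw [mem_grid] at hq
    simpa only [Prod.mk.injEq] using h c d hq.1 hq.2
  simp only [gridAdj_iff hm, gridCycleEdge, rowStep, IsRemovedRowEdge, IsDiagonal]
  obtain rfl | rfl | rfl | hb : b = 0 ∨ b = 1 ∨ b = 2 ∨ 3 ≤ b := by omega
  · by_cases ha : a + 1 < g
    · exact ⟨a, m - 1, a + 1, 1, by omega, fun c d _ _ => by omega⟩
    · exact ⟨a, m - 1, a, 1, by omega, fun c d _ _ => by omega⟩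
  · by_cases ha : a + 1 < g <;> by_cases ha₀ : a = 0
    · exact ⟨a + 1, 2, a, 2, by omega, fun c d _ _ => by omega⟩
    · exact ⟨a + 1, 2, a - 1, 0, by omega, fun c d _ _ => by omega⟩
    · exact ⟨a, 0, a, 2, by omega, fun c d _ _ => by omega⟩
    · exact ⟨a, 0, a - 1, 0, by omega, fun c d _ _ => by omega⟩
  · by_cases hm₃ : m = 3 <;> by_cases ha₀ : a = 0
    · exact ⟨a, 0, a, 1, by omega, fun c d _ _ => by omega⟩
    · exact ⟨a, 0, a - 1, 1, by omega, fun c d _ _ => by omega⟩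
    · exact ⟨a, 3, a, 1, by omega, fun c d _ _ => by omega⟩
    · exact ⟨a, 3, a - 1, 1, by omega, fun c d _ _ => by omega⟩
  · by_cases hbm : b + 1 = m
    · exact ⟨a, b - 1, a, 0, by omega, fun c d _ _ => by omega⟩
    · exact ⟨a, b - 1, a, b + 1, by omega, fun c d _ _ => by omega⟩

section Edges

variable {g m : ℕ} (hm : 3 ≤ m)
include hm

lemma gridAdj_succ {a b : ℕ} (hb : 2 ≤ b) : gridAdj g m (a, b) (a, b + 1) :=
  (gridAdj_iff hm).mpr <| .inl
    ⟨⟨rfl, .inl (.inl rfl)⟩, fun ⟨_, h⟩ => by unfold IsRemovedRowEdge at h; omega⟩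

lemma gridAdj_wrap (a : ℕ) : gridAdj g m (a, m - 1) (a, 0) :=
  (gridAdj_iff hm).mpr <| .inl
    ⟨⟨rfl, .inl (.inr ⟨by omega, rfl⟩)⟩, fun ⟨_, h⟩ => by unfold IsRemovedRowEdge at h; omega⟩

lemma gridAdj_zero_two_zero_one : gridAdj g m (0, 2) (0, 1) :=
  (gridAdj_iff hm).mpr <| .inl
    ⟨⟨rfl, .inr (.inl rfl)⟩, fun ⟨_, h⟩ => by unfold IsRemovedRowEdge at h; omega⟩

lemma gridAdj_diag_one {a : ℕ} (ha : a + 1 < g) : gridAdj g m (a, 1) (a + 1, 2) :=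
  (gridAdj_iff hm).mpr <| .inr <| .inl ⟨rfl, ha, .inl ⟨rfl, rfl⟩⟩

lemma gridAdj_diag_zero {a : ℕ} (ha : a + 1 < g) : gridAdj g m (a, 0) (a + 1, 1) :=
  (gridAdj_iff hm).mpr <| .inr <| .inl ⟨rfl, ha, .inr ⟨rfl, rfl⟩⟩

end Edges

variable {n k r : ℕ}

lemma three_le_div_gcd (hk : 1 ≤ k) (hn : 2 * k + 1 ≤ n) : 3 ≤ n / n.gcd k := by
  have hg : 0 < n.gcd k := Nat.gcd_pos_of_pos_right n hk
  have hgk : n.gcd k ≤ k := Nat.gcd_le_right n hk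
  have hgn : n.gcd k ≤ n - 2 * k := Nat.le_of_dvd (by omega)
    (Nat.dvd_sub (Nat.gcd_dvd_left n k) (Dvd.dvd.mul_left (Nat.gcd_dvd_right n k) 2))
  rw [Nat.le_div_iff_mul_le hg]
  omega

variable (n k r) in
def gridIndex (p : ℕ × ℕ) : ZMod n := ((r + p.1 + p.2 * k : ℕ) : ZMod n)

variable (n k r) in
lemma gridIndex_injOn : Set.InjOn (gridIndex n k r) (grid (n.gcd k) (n / n.gcd k)) := by
  rintro ⟨i, j⟩ hp ⟨i', j'⟩ hq h
  simp only [Finset.mem_coe, mem_grid] at hp hq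
  have hn : 0 < n := Nat.pos_of_ne_zero (by rintro rfl; simp at hp)
  have hmod : r + i + j * k ≡ r + i' + j' * k [MOD n] :=
    (ZMod.natCast_eq_natCast_iff _ _ _).mp h
  have hk : k ≡ 0 [MOD n.gcd k] := Nat.modEq_zero_iff_dvd.mpr (Nat.gcd_dvd_right n k)
  have hrow : ∀ i j, r + i + j * k ≡ r + i [MOD n.gcd k] := fun i j => by
    simpa using (hk.mul_left j).add_left (r + i)
  have hi : i ≡ i' [MOD n.gcd k] := Nat.ModEq.add_left_cancel' r <|
    (hrow i j).symm.trans ((hmod.of_dvd (Nat.gcd_dvd_left n k)).trans (hrow i' j'))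
  obtain rfl := hi.eq_of_lt_of_lt hp.1 hq.1
  have hcol : j * k ≡ j' * k [MOD n] := hmod.add_left_cancel' (r + i)
  exact Prod.ext rfl ((hcol.cancel_right_div_gcd hn).eq_of_lt_of_lt hp.2 hq.2)

variable (r) in
lemma gridIndex_surjective [NeZero n] (v : ZMod n) :
    ∃ p ∈ grid (n.gcd k) (n / n.gcd k), gridIndex n k r p = v := by
  have himage : (grid (n.gcd k) (n / n.gcd k)).image (gridIndex n k r) = Finset.univ := by
    refine Finset.eq_univ_of_card _ ?_
    rw [Finset.card_image_of_injOn (gridIndex_injOn n k r), grid, Finset.card_product,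
      Finset.card_range, Finset.card_range, Nat.mul_div_cancel' (Nat.gcd_dvd_left n k), ZMod.card]
  rw [← Finset.mem_image, himage]
  exact Finset.mem_univ v

lemma gridIndex_succ (a b : ℕ) : gridIndex n k r (a, b + 1) = gridIndex n k r (a, b) + k := by
  simp only [gridIndex]
  push_cast
  ring

lemma gridIndex_row_period (a : ℕ) :
    gridIndex n k r (a, n / n.gcd k) = gridIndex n k r (a, 0) := by
  have h : n / n.gcd k * k = n * (k / n.gcd k) := by
    rw [Nat.div_mul_right_comm (Nat.gcd_dvd_left n k),
      Nat.mul_div_assoc _ (Nat.gcd_dvd_right n k)]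
  simp only [gridIndex, Nat.cast_add, Nat.cast_mul, zero_mul, add_zero]
  rw [← Nat.cast_mul, h, Nat.cast_mul, ZMod.natCast_self, zero_mul, add_zero]

lemma gridIndex_eq_add_iff {p q : ℕ × ℕ} (hp : p ∈ grid (n.gcd k) (n / n.gcd k))
    (hq : q ∈ grid (n.gcd k) (n / n.gcd k)) :
    gridIndex n k r q = gridIndex n k r p + k ↔ p.1 = q.1 ∧ rowStep (n / n.gcd k) p.2 q.2 := by
  obtain ⟨a, b⟩ := p
  obtain ⟨c, d⟩ := q
  simp only [mem_grid] at hp hq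
  have inj := gridIndex_injOn n k r
  rw [← gridIndex_succ]
  obtain hb | hb : b + 1 < n / n.gcd k ∨ b + 1 = n / n.gcd k := by omega
  · rw [inj.eq_iff (mem_grid.mpr hq) ((mem_grid (p := (a, b + 1))).mpr ⟨hp.1, hb⟩)]
    simp only [rowStep, Prod.mk.injEq]
    omega
  · rw [hb, gridIndex_row_period,
      inj.eq_iff (mem_grid.mpr hq) ((mem_grid (p := (a, 0))).mpr ⟨hp.1, by omega⟩)]
    simp only [rowStep, Prod.mk.injEq]
    omega

lemma cycleEdge_gridIndex_iff {p q : ℕ × ℕ} (hp : p ∈ grid (n.gcd k) (n / n.gcd k))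
    (hq : q ∈ grid (n.gcd k) (n / n.gcd k)) :
    cycleEdge n k (gridIndex n k r p) (gridIndex n k r q) ↔
      gridCycleEdge (n / n.gcd k) p q := by
  rw [cycleEdge, gridIndex_eq_add_iff hp hq, gridIndex_eq_add_iff hq hp, gridCycleEdge,
    @eq_comm _ q.1, ← and_or_left]

lemma gluingEdge_gridIndex_iff (hm : 3 ≤ n / n.gcd k) {p q : ℕ × ℕ}
    (hp : p ∈ grid (n.gcd k) (n / n.gcd k)) (hq : q ∈ grid (n.gcd k) (n / n.gcd k)) :
    gluingEdge n k r (gridIndex n k r p) (gridIndex n k r q) ↔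
      gridGluingEdge (n.gcd k) p q := by
  have h₀ (j : ℕ) : ((r + j : ℕ) : ZMod n) = gridIndex n k r (j, 0) := by
    simp [gridIndex]
  have h₁ (j : ℕ) : ((r + j : ℕ) : ZMod n) + k = gridIndex n k r (j, 1) := by
    simp [gridIndex]
  have h₂ (j : ℕ) :
      ((r + j : ℕ) : ZMod n) + ((2 * k + 1 : ℕ) : ZMod n) = gridIndex n k r (j + 1, 2) := by
    simp only [gridIndex]
    push_cast
    ring
  have h₃ (j : ℕ) :
      ((r + j : ℕ) : ZMod n) + ((k + 1 : ℕ) : ZMod n) = gridIndex n k r (j + 1, 1) := by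
    simp only [gridIndex]
    push_cast
    ring
  simp only [gluingEdge, gridGluingEdge, h₁, h₂, h₃]
  simp only [h₀]
  refine exists_congr fun j => and_congr_right fun hj => ?_
  have inj := gridIndex_injOn n k r
  have mem (a b : ℕ) (ha : a < n.gcd k) (hb : b < n / n.gcd k) :
      (a, b) ∈ (grid (n.gcd k) (n / n.gcd k) : Set (ℕ × ℕ)) := mem_grid.mpr ⟨ha, hb⟩
  rw [inj.pairEq_iff hp hq (mem j 0 (by omega) (by omega)) (mem j 1 (by omega) (by omega)),
    inj.pairEq_iff hp hq (mem j 1 (by omega) (by omega)) (mem (j + 1) 2 hj (by omega)),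
    inj.pairEq_iff hp hq (mem (j + 1) 2 hj (by omega)) (mem (j + 1) 1 hj (by omega)),
    inj.pairEq_iff hp hq (mem (j + 1) 1 hj (by omega)) (mem j 0 (by omega) (by omega))]

lemma adj_gridIndex_iff (hm : 3 ≤ n / n.gcd k) {p q : ℕ × ℕ}
    (hp : p ∈ grid (n.gcd k) (n / n.gcd k)) (hq : q ∈ grid (n.gcd k) (n / n.gcd k)) :
    (symmDiffGraph n k r).Adj (gridIndex n k r p) (gridIndex n k r q) ↔
      gridAdj (n.gcd k) (n / n.gcd k) p q := by
  rw [gridAdj, ← (gridIndex_injOn n k r).ne_iff hp hq, ← cycleEdge_gridIndex_iff hp hq,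
    ← gluingEdge_gridIndex_iff hm hp hq]
  rfl

lemma isCycles_symmDiffGraph [NeZero n] (hm : 3 ≤ n / n.gcd k) :
    (symmDiffGraph n k r).IsCycles := by
  intro v _
  obtain ⟨p, hp, rfl⟩ := gridIndex_surjective (k := k) r v
  obtain ⟨x, hx, y, hy, hxy, hadj⟩ := exists_gridAdj_iff_eq_or_eq hm hp
  have inj := gridIndex_injOn n k r
  suffices (symmDiffGraph n k r).neighborSet (gridIndex n k r p) =
      {gridIndex n k r x, gridIndex n k r y} by
    rw [this, Set.ncard_pair ((inj.ne_iff hx hy).mpr hxy)]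
  ext w
  obtain ⟨q, hq, rfl⟩ := gridIndex_surjective (k := k) r w
  rw [SimpleGraph.mem_neighborSet, adj_gridIndex_iff hm hp hq, hadj q hq, Set.mem_insert_iff,
    Set.mem_singleton_iff, inj.eq_iff hq hx, inj.eq_iff hq hy]

lemma reachable_of_gridAdj (hm : 3 ≤ n / n.gcd k) {p q : ℕ × ℕ}
    (hp : p ∈ grid (n.gcd k) (n / n.gcd k)) (hq : q ∈ grid (n.gcd k) (n / n.gcd k))
    (h : gridAdj (n.gcd k) (n / n.gcd k) p q) :
    (symmDiffGraph n k r).Reachable (gridIndex n k r p) (gridIndex n k r q) :=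
  ((adj_gridIndex_iff hm hp hq).mpr h).reachable

lemma reachable_along_row (hm : 3 ≤ n / n.gcd k) {a b : ℕ} (ha : a < n.gcd k)
    (hb : b < n / n.gcd k) (hb₁ : b ≠ 1) :
    (symmDiffGraph n k r).Reachable (gridIndex n k r (a, 2)) (gridIndex n k r (a, b)) := by
  have up (b : ℕ) (hb₂ : 2 ≤ b) : b < n / n.gcd k →
      (symmDiffGraph n k r).Reachable (gridIndex n k r (a, 2)) (gridIndex n k r (a, b)) := by
    induction b, hb₂ using Nat.le_induction with
    | base => exact fun _ => .refl _
    | succ b hb₂ ih =>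
      exact fun hbm => (ih (by omega)).trans (reachable_of_gridAdj hm
        (mem_grid.mpr ⟨ha, by omega⟩) (mem_grid.mpr ⟨ha, hbm⟩) (gridAdj_succ hm hb₂))
  obtain hb₂ | rfl : 2 ≤ b ∨ b = 0 := by omega
  · exact up b hb₂ hb
  · exact (up _ (by omega) (by omega)).trans (reachable_of_gridAdj hm
      (mem_grid.mpr ⟨ha, by omega⟩) (mem_grid.mpr ⟨ha, hb⟩) (gridAdj_wrap hm a))

lemma reachable_gridIndex (hm : 3 ≤ n / n.gcd k) {a : ℕ} (ha : a < n.gcd k) {b : ℕ}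
    (hb : b < n / n.gcd k) :
    (symmDiffGraph n k r).Reachable (gridIndex n k r (0, 2)) (gridIndex n k r (a, b)) := by
  induction a generalizing b with
  | zero =>
    obtain rfl | hb₁ := eq_or_ne b 1
    · exact reachable_of_gridAdj hm (mem_grid.mpr ⟨ha, by omega⟩) (mem_grid.mpr ⟨ha, hb⟩)
        (gridAdj_zero_two_zero_one hm)
    · exact reachable_along_row hm ha hb hb₁
  | succ a ih =>
    obtain rfl | hb₁ := eq_or_ne b 1
    · exact (ih (by omega) (b := 0) (by omega)).trans (reachable_of_gridAdj hm
        (mem_grid.mpr ⟨by omega, by omega⟩) (mem_grid.mpr ⟨ha, hb⟩) (gridAdj_diag_zero hm ha))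
    · have h₂ := (ih (by omega) (b := 1) (by omega)).trans (reachable_of_gridAdj hm
        (mem_grid.mpr ⟨by omega, by omega⟩) (mem_grid.mpr ⟨ha, by omega⟩)
        (gridAdj_diag_one hm ha))
      exact h₂.trans (reachable_along_row hm ha hb hb₁)

lemma connected_symmDiffGraph [NeZero n] (hm : 3 ≤ n / n.gcd k) :
    (symmDiffGraph n k r).Connected := by
  refine (SimpleGraph.connected_iff_exists_forall_reachable _).mpr
    ⟨gridIndex n k r (0, 2), fun v => ?_⟩
  obtain ⟨⟨a, b⟩, hp, rfl⟩ := gridIndex_surjective (k := k) r v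
  exact reachable_gridIndex hm (mem_grid.mp hp).1 (mem_grid.mp hp).2

end SymmDiffCycle

theorem symmDiff_single_cycle_general (n k r : ℕ) [NeZero n] (hk : 1 ≤ k) (hn : 2 * k + 1 ≤ n) :
    ∃ (a : ZMod n) (p : (symmDiffGraph n k r).Walk a a), p.IsHamiltonianCycle := by
  have hm := SymmDiffCycle.three_le_div_gcd hk hn
  have : Nontrivial (ZMod n) := ZMod.nontrivial_iff.mpr (by omega)
  exact ⟨0, (SymmDiffCycle.connected_symmDiffGraph hm).exists_isHamiltonianCycle_of_isCycles
    (SymmDiffCycle.isCycles_symmDiffGraph hm) 0⟩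

/-- Taking the symmetric difference of the union of the `g = gcd(n,k)` cycles
`C(s_i) = (s_{i+kj})_j` with the 4-cycles
`(s_{r+j}, s_{r+j+k}, s_{r+j+2k+1}, s_{r+j+k+1})`, `j = 0,…,g-2`, yields a single
cycle on the vertex set `{s_0, …, s_{n-1}}` (identified with `ℤ/nℤ` via `i ↦ s_i`). -/
theorem symmDiff_single_cycle (n k r : ℕ) [NeZero n] (hk : 1 ≤ k) (hn : 2 * k + 1 ≤ n)
    (hr : r < n) :
    ∃ (a : ZMod n) (p : (symmDiffGraph n k r).Walk a a), p.IsHamiltonianCycle :=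
  symmDiff_single_cycle_general n k r hk hn
end
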